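/- arXiv:2005.09783 — 7 statements merged into one kernel-verified Lean document; each statement's English description precedes it below -/
import Mathlib

section
/- The set of integer solutions (a,b) ∈ ℤ × ℤ of the equation 6a² − 4ab + 18a + b² − 5b + 12 = 0 satisfying the two conditions [b < 0, or (a + b < 0 and b ≥ 0)] and [b > −3, or (a + b > −7 and b ≤ −3)] is exactly {(-1,0), (-2,0), (-2,-3), (-3,-3)}. -/
/-- The set of integer solutions (a,b) of 6a² − 4ab + 18a + b² − 5b + 12 = 0 satisfying
[b < 0 or (a + b < 0 and b ≥ 0)] and [b > −3 or (a + b > −7 and b ≤ −3)]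
is exactly {(-1,0), (-2,0), (-2,-3), (-3,-3)}. -/
theorem solutions_eq_P2_OO1 :
    {p : ℤ × ℤ | 6 * p.1 ^ 2 - 4 * p.1 * p.2 + 18 * p.1 + p.2 ^ 2 - 5 * p.2 + 12 = 0 ∧
      (p.2 < 0 ∨ (p.1 + p.2 < 0 ∧ 0 ≤ p.2)) ∧
      (p.2 > -3 ∨ (p.1 + p.2 > -7 ∧ p.2 ≤ -3))} =
      ({(-1, 0), (-2, 0), (-2, -3), (-3, -3)} : Set (ℤ × ℤ)) := by
  ext ⟨a, b⟩
  simp only [Set.mem_setOf_eq, Set.mem_insert_iff, Set.mem_singleton_iff, Prod.mk.injEq]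
  constructor
  · rintro ⟨h, h1, h2⟩
    have ha1 : -3 ≤ a := by nlinarith [sq_nonneg (2*b - 4*a - 5)]
    have ha2 : a ≤ -1 := by nlinarith [sq_nonneg (2*b - 4*a - 5)]
    interval_cases a
    · -- a = -3 : b² + 7b + 12 = 0
      have hb : (b + 3) * (b + 4) = 0 := by nlinarith
      rcases mul_eq_zero.mp hb with hb | hb <;> omega
    · -- a = -2 : b² + 3b = 0
      have hb : b * (b + 3) = 0 := by nlinarith
      rcases mul_eq_zero.mp hb with hb | hb <;> omega
    · -- a = -1 : b² - b = 0
      have hb : b * (b - 1) = 0 := by nlinarith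
      rcases mul_eq_zero.mp hb with hb | hb <;> omega
  · rintro (⟨rfl, rfl⟩ | ⟨rfl, rfl⟩ | ⟨rfl, rfl⟩ | ⟨rfl, rfl⟩) <;> norm_num
end

section
/- Let Z ⊆ ℤ × ℤ be the set of pairs (a,b) with b = −1 or (a,b) ∈ {(-2,-2), (-2,0), (-1,-2), (-1,0)}. For a tuple (D₁,…,D₅) ∈ (ℤ×ℤ)⁵ set D₀ = (0,0), and call the tuple an exceptional pattern if Dᵢ − Dⱼ ∈ Z for all 0 ≤ i < j ≤ 5. Then (D₁,…,D₅) is an exceptional pattern if and only if there exists a ∈ ℤ such that (D₁,…,D₅) is one of the following three tuples: (1) ((1,0),(2,0),(a,1),(a+1,1),(a+2,1)); (2) ((1,0),(a,1),(a+1,1),(a+2,1),(2,2)); (3) ((a,1),(a+1,1),(a+2,1),(1,2),(2,2)). -/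
/-- The set of cohomologically zero classes on P_{P²}(O(-1) ⊕ O(1)). -/
def czSetA : Set (ℤ × ℤ) :=
  {p | p.2 = -1 ∨ p = (-2, -2) ∨ p = (-2, 0) ∨ p = (-1, -2) ∨ p = (-1, 0)}

private def cz (f s : ℤ) : Prop := -2 ≤ s ∧ s ≤ 0 ∧ (s = -1 ∨ (-2 ≤ f ∧ f ≤ -1))

set_option maxHeartbeats 2000000 in
private theorem key_lemma (f1 s1 f2 s2 f3 s3 f4 s4 f5 s5 : ℤ)
    (h01 : cz (-f1) (-s1)) (h02 : cz (-f2) (-s2)) (h03 : cz (-f3) (-s3))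
    (h04 : cz (-f4) (-s4)) (h05 : cz (-f5) (-s5))
    (h12 : cz (f1-f2) (s1-s2)) (h13 : cz (f1-f3) (s1-s3)) (h14 : cz (f1-f4) (s1-s4))
    (h15 : cz (f1-f5) (s1-s5)) (h23 : cz (f2-f3) (s2-s3)) (h24 : cz (f2-f4) (s2-s4))
    (h25 : cz (f2-f5) (s2-s5)) (h34 : cz (f3-f4) (s3-s4)) (h35 : cz (f3-f5) (s3-s5))
    (h45 : cz (f4-f5) (s4-s5)) :
    (f1 = 1 ∧ s1 = 0 ∧ f2 = 2 ∧ s2 = 0 ∧ s3 = 1 ∧ f4 = f3 + 1 ∧ s4 = 1 ∧ f5 = f3 + 2 ∧ s5 = 1) ∨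
    (f1 = 1 ∧ s1 = 0 ∧ s2 = 1 ∧ f3 = f2 + 1 ∧ s3 = 1 ∧ f4 = f2 + 2 ∧ s4 = 1 ∧ f5 = 2 ∧ s5 = 2) ∨
    (s1 = 1 ∧ f2 = f1 + 1 ∧ s2 = 1 ∧ f3 = f1 + 2 ∧ s3 = 1 ∧ f4 = 1 ∧ s4 = 2 ∧ f5 = 2 ∧ s5 = 2) := by
  unfold cz at *
  have b1 : 0 ≤ s1 := by omega
  have m12 : s1 ≤ s2 := by omega
  have m23 : s2 ≤ s3 := by omega
  have m34 : s3 ≤ s4 := by omega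
  have m45 : s4 ≤ s5 := by omega
  have b5 : s5 ≤ 2 := by omega
  have u1 : s1 ≤ 2 := by omega
  have u2 : s2 ≤ 2 := by omega
  have u3 : s3 ≤ 2 := by omega
  have u4 : s4 ≤ 2 := by omega
  interval_cases s1 <;> interval_cases s2 <;> interval_cases s3 <;>
    interval_cases s4 <;> interval_cases s5 <;>
    first
      | (exfalso; omega)
      | (exact Or.inl (by omega))
      | (exact Or.inr (Or.inl (by omega)))
      | (exact Or.inr (Or.inr (by omega)))

private theorem cz_of_mem {p : ℤ × ℤ} (h : p ∈ czSetA) : cz p.1 p.2 := by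
  obtain ⟨f, s⟩ := p
  simp only [czSetA, Set.mem_setOf_eq, Prod.mk.injEq] at h
  unfold cz
  omega

/-- Classification of exceptional patterns of length 6 on P_{P²}(O(-1) ⊕ O(1)):
with D₀ = (0,0), we have Dᵢ − Dⱼ ∈ Z for all 0 ≤ i < j ≤ 5 iff the tuple
(D₁,…,D₅) is one of the three listed families. -/
theorem exceptional_pattern_classification_PP2_O2
    (D : Fin 6 → ℤ × ℤ) (hD0 : D 0 = (0, 0)) :
    (∀ i j : Fin 6, i < j → D i - D j ∈ czSetA) ↔
      ∃ a : ℤ,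
        (D 1, D 2, D 3, D 4, D 5) = ((1, 0), (2, 0), (a, 1), (a + 1, 1), (a + 2, 1)) ∨
        (D 1, D 2, D 3, D 4, D 5) = ((1, 0), (a, 1), (a + 1, 1), (a + 2, 1), (2, 2)) ∨
        (D 1, D 2, D 3, D 4, D 5) = ((a, 1), (a + 1, 1), (a + 2, 1), (1, 2), (2, 2)) := by
  constructor
  · intro h
    have h01 := cz_of_mem (h 0 1 (by decide))
    have h02 := cz_of_mem (h 0 2 (by decide))
    have h03 := cz_of_mem (h 0 3 (by decide))
    have h04 := cz_of_mem (h 0 4 (by decide))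
    have h05 := cz_of_mem (h 0 5 (by decide))
    have h12 := cz_of_mem (h 1 2 (by decide))
    have h13 := cz_of_mem (h 1 3 (by decide))
    have h14 := cz_of_mem (h 1 4 (by decide))
    have h15 := cz_of_mem (h 1 5 (by decide))
    have h23 := cz_of_mem (h 2 3 (by decide))
    have h24 := cz_of_mem (h 2 4 (by decide))
    have h25 := cz_of_mem (h 2 5 (by decide))
    have h34 := cz_of_mem (h 3 4 (by decide))
    have h35 := cz_of_mem (h 3 5 (by decide))
    have h45 := cz_of_mem (h 4 5 (by decide))
    simp only [hD0, Prod.fst_sub, Prod.snd_sub, Prod.fst_zero, Prod.snd_zero, zero_sub]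
      at h01 h02 h03 h04 h05 h12 h13 h14 h15 h23 h24 h25 h34 h35 h45
    have key := key_lemma _ _ _ _ _ _ _ _ _ _
      h01 h02 h03 h04 h05 h12 h13 h14 h15 h23 h24 h25 h34 h35 h45
    rcases key with k | k | k
    · exact ⟨(D 3).1, Or.inl (by simp only [Prod.ext_iff, Prod.mk.injEq]; tauto)⟩
    · exact ⟨(D 2).1, Or.inr (Or.inl (by simp only [Prod.ext_iff, Prod.mk.injEq]; tauto))⟩
    · exact ⟨(D 1).1, Or.inr (Or.inr (by simp only [Prod.ext_iff, Prod.mk.injEq]; tauto))⟩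
  · rintro ⟨a, h | h | h⟩ <;>
    · simp only [Prod.mk.injEq] at h
      obtain ⟨h1, h2, h3, h4, h5⟩ := h
      have e0 : (⟨0, by norm_num⟩ : Fin 6) = 0 := rfl
      have e1 : (⟨1, by norm_num⟩ : Fin 6) = 1 := rfl
      have e2 : (⟨2, by norm_num⟩ : Fin 6) = 2 := rfl
      have e3 : (⟨3, by norm_num⟩ : Fin 6) = 3 := rfl
      have e4 : (⟨4, by norm_num⟩ : Fin 6) = 4 := rfl
      have e5 : (⟨5, by norm_num⟩ : Fin 6) = 5 := rfl
      intro i j hij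
      fin_cases i <;> fin_cases j <;>
        first
          | exact absurd hij (by decide)
          | (clear hij
             simp only [e0, e1, e2, e3, e4, e5, hD0, h1, h2, h3, h4, h5, czSetA,
               Set.mem_setOf_eq, Prod.mk.injEq, Prod.ext_iff, Prod.fst_sub, Prod.snd_sub]
             omega)
end

section
/- Let Z ⊆ ℤ × ℤ be the set of pairs (a,b) with b = −1 or (a,b) ∈ {(-1,0), (-2,0), (-3,0), (-4,-2), (-5,-2), (-6,-2)}. For a tuple (D₁,…,D₇) ∈ (ℤ×ℤ)⁷ set D₀ = (0,0), and call the tuple an exceptional pattern if Dᵢ − Dⱼ ∈ Z for all 0 ≤ i < j ≤ 7. Then (D₁,…,D₇) is an exceptional pattern if and only if there exists a ∈ ℤ such that (D₁,…,D₇) is one of the following four tuples: (1) ((1,0),(2,0),(3,0),(a,1),(a+1,1),(a+2,1),(a+3,1)); (2) ((1,0),(2,0),(a,1),(a+1,1),(a+2,1),(a+3,1),(6,2)); (3) ((1,0),(a,1),(a+1,1),(a+2,1),(a+3,1),(5,2),(6,2)); (4) ((a,1),(a+1,1),(a+2,1),(a+3,1),(4,2),(5,2),(6,2)). -/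
/-- The set of cohomologically zero classes on P_{P³}(O ⊕ O(3)). -/
def czSetC : Set (ℤ × ℤ) :=
  {p | p.2 = -1 ∨ p = (-1, 0) ∨ p = (-2, 0) ∨ p = (-3, 0) ∨
       p = (-4, -2) ∨ p = (-5, -2) ∨ p = (-6, -2)}

private abbrev CZ (u v : ℤ) : Prop :=
  (v = -1) ∨ (v = 0 ∧ -3 ≤ u ∧ u ≤ -1) ∨ (v = -2 ∧ -6 ≤ u ∧ u ≤ -4)

/-- Linear-arithmetic form of membership in `czSetC`. -/
private lemma czSetC_iff (p q : ℤ × ℤ) :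
    p - q ∈ czSetC ↔ CZ (p.1 - q.1) (p.2 - q.2) := by
  simp only [czSetC, Set.mem_setOf_eq, Prod.ext_iff, Prod.fst_sub, Prod.snd_sub, CZ]
  omega

private lemma cz_le (u v : ℤ) (h : CZ u v) : v ≤ 0 ∧ -2 ≤ v := by
  rcases h with h | h | h <;> omega

private lemma profile_cases (y1 y2 y3 : ℤ)
    (h1 : 0 - y1 ≤ 0) (h2 : y1 - y2 ≤ 0) (h3 : y2 - y3 ≤ 0) (h4 : y3 - 1 ≤ 0) :
    (y1 = 0 ∧ y2 = 0 ∧ y3 = 0) ∨ (y1 = 0 ∧ y2 = 0 ∧ y3 = 1) ∨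
    (y1 = 0 ∧ y2 = 1 ∧ y3 = 1) ∨ (y1 = 1 ∧ y2 = 1 ∧ y3 = 1) := by omega

private lemma profile_cases' (y5 y6 y7 : ℤ)
    (h1 : 1 - y5 ≤ 0) (h2 : y5 - y6 ≤ 0) (h3 : y6 - y7 ≤ 0) (h4 : -2 ≤ 0 - y7) :
    (y5 = 1 ∧ y6 = 1 ∧ y7 = 1) ∨ (y5 = 1 ∧ y6 = 1 ∧ y7 = 2) ∨
    (y5 = 1 ∧ y6 = 2 ∧ y7 = 2) ∨ (y5 = 2 ∧ y6 = 2 ∧ y7 = 2) := by omega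

/-- The middle element is on level 1. -/
private lemma y4_eq_one (x1 x2 x3 x4 x5 x6 x7 y1 y2 y3 y4 y5 y6 y7 : ℤ)
    (m1 : 0 - y1 ≤ 0) (m2 : y1 - y2 ≤ 0) (m3 : y2 - y3 ≤ 0) (m4 : y3 - y4 ≤ 0)
    (m5 : y4 - y5 ≤ 0) (m6 : y5 - y6 ≤ 0) (m7 : y6 - y7 ≤ 0) (m8 : -2 ≤ 0 - y7)
    (h01 : CZ (0 - x1) (0 - y1)) (h12 : CZ (x1 - x2) (y1 - y2))
    (h23 : CZ (x2 - x3) (y2 - y3)) (h34 : CZ (x3 - x4) (y3 - y4))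
    (h04 : CZ (0 - x4) (0 - y4)) (h45 : CZ (x4 - x5) (y4 - y5))
    (h56 : CZ (x5 - x6) (y5 - y6)) (h67 : CZ (x6 - x7) (y6 - y7))
    (h07 : CZ (0 - x7) (0 - y7)) : y4 = 1 := by
  have : y4 = 0 ∨ y4 = 1 ∨ y4 = 2 := by omega
  rcases this with h | h | h
  · exfalso; omega
  · exact h
  · exfalso; omega

set_option maxHeartbeats 1000000 in
private lemma forward_helper
    (x1 x2 x3 x4 x5 x6 x7 y1 y2 y3 y4 y5 y6 y7 : ℤ)
    (x0 y0 : ℤ) (e1 : x0 = 0) (e2 : y0 = 0)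
    (h01 : CZ (x0 - x1) (y0 - y1))
    (h02 : CZ (x0 - x2) (y0 - y2))
    (h03 : CZ (x0 - x3) (y0 - y3))
    (h04 : CZ (x0 - x4) (y0 - y4))
    (h05 : CZ (x0 - x5) (y0 - y5))
    (h06 : CZ (x0 - x6) (y0 - y6))
    (h07 : CZ (x0 - x7) (y0 - y7))
    (h12 : CZ (x1 - x2) (y1 - y2))
    (h13 : CZ (x1 - x3) (y1 - y3))
    (h14 : CZ (x1 - x4) (y1 - y4))
    (h15 : CZ (x1 - x5) (y1 - y5))
    (h16 : CZ (x1 - x6) (y1 - y6))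
    (h17 : CZ (x1 - x7) (y1 - y7))
    (h23 : CZ (x2 - x3) (y2 - y3))
    (h24 : CZ (x2 - x4) (y2 - y4))
    (h25 : CZ (x2 - x5) (y2 - y5))
    (h26 : CZ (x2 - x6) (y2 - y6))
    (h27 : CZ (x2 - x7) (y2 - y7))
    (h34 : CZ (x3 - x4) (y3 - y4))
    (h35 : CZ (x3 - x5) (y3 - y5))
    (h36 : CZ (x3 - x6) (y3 - y6))
    (h37 : CZ (x3 - x7) (y3 - y7))
    (h45 : CZ (x4 - x5) (y4 - y5))
    (h46 : CZ (x4 - x6) (y4 - y6))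
    (h47 : CZ (x4 - x7) (y4 - y7))
    (h56 : CZ (x5 - x6) (y5 - y6))
    (h57 : CZ (x5 - x7) (y5 - y7))
    (h67 : CZ (x6 - x7) (y6 - y7)) :
    ∃ a : ℤ,
      (x1 = 1 ∧ y1 = 0 ∧ x2 = 2 ∧ y2 = 0 ∧ x3 = 3 ∧ y3 = 0 ∧ x4 = a ∧ y4 = 1 ∧
        x5 = a + 1 ∧ y5 = 1 ∧ x6 = a + 2 ∧ y6 = 1 ∧ x7 = a + 3 ∧ y7 = 1) ∨
      (x1 = 1 ∧ y1 = 0 ∧ x2 = 2 ∧ y2 = 0 ∧ x3 = a ∧ y3 = 1 ∧ x4 = a + 1 ∧ y4 = 1 ∧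
        x5 = a + 2 ∧ y5 = 1 ∧ x6 = a + 3 ∧ y6 = 1 ∧ x7 = 6 ∧ y7 = 2) ∨
      (x1 = 1 ∧ y1 = 0 ∧ x2 = a ∧ y2 = 1 ∧ x3 = a + 1 ∧ y3 = 1 ∧ x4 = a + 2 ∧ y4 = 1 ∧
        x5 = a + 3 ∧ y5 = 1 ∧ x6 = 5 ∧ y6 = 2 ∧ x7 = 6 ∧ y7 = 2) ∨
      (x1 = a ∧ y1 = 1 ∧ x2 = a + 1 ∧ y2 = 1 ∧ x3 = a + 2 ∧ y3 = 1 ∧ x4 = a + 3 ∧ y4 = 1 ∧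
        x5 = 4 ∧ y5 = 2 ∧ x6 = 5 ∧ y6 = 2 ∧ x7 = 6 ∧ y7 = 2) := by
  subst e1 e2
  have m1 := (cz_le _ _ h01).1
  have m2 := (cz_le _ _ h12).1
  have m3 := (cz_le _ _ h23).1
  have m4 := (cz_le _ _ h34).1
  have m5 := (cz_le _ _ h45).1
  have m6 := (cz_le _ _ h56).1
  have m7 := (cz_le _ _ h67).1
  have m8 := (cz_le _ _ h07).2
  have g4 : y4 = 1 :=
    y4_eq_one x1 x2 x3 x4 x5 x6 x7 y1 y2 y3 y4 y5 y6 y7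
      m1 m2 m3 m4 m5 m6 m7 m8 h01 h12 h23 h34 h04 h45 h56 h67 h07
  subst g4
  have A := profile_cases y1 y2 y3 m1 m2 m3 m4
  have B := profile_cases' y5 y6 y7 m5 m6 m7 m8
  rcases A with ⟨a1, a2, a3⟩ | ⟨a1, a2, a3⟩ | ⟨a1, a2, a3⟩ | ⟨a1, a2, a3⟩ <;>
      subst a1 a2 a3
  · rcases B with ⟨b1, b2, b3⟩ | ⟨b1, b2, b3⟩ | ⟨b1, b2, b3⟩ | ⟨b1, b2, b3⟩ <;>
        subst b1 b2 b3
    · exact ⟨x4, Or.inl (by omega)⟩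
    · exfalso; omega
    · exfalso; omega
    · exfalso; omega
  · rcases B with ⟨b1, b2, b3⟩ | ⟨b1, b2, b3⟩ | ⟨b1, b2, b3⟩ | ⟨b1, b2, b3⟩ <;>
        subst b1 b2 b3
    · exfalso; omega
    · exact ⟨x3, Or.inr (Or.inl (by omega))⟩
    · exfalso; omega
    · exfalso; omega
  · rcases B with ⟨b1, b2, b3⟩ | ⟨b1, b2, b3⟩ | ⟨b1, b2, b3⟩ | ⟨b1, b2, b3⟩ <;>
        subst b1 b2 b3
    · exfalso; omega
    · exfalso; omega
    · exact ⟨x2, Or.inr (Or.inr (Or.inl (by omega)))⟩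
    · exfalso; omega
  · rcases B with ⟨b1, b2, b3⟩ | ⟨b1, b2, b3⟩ | ⟨b1, b2, b3⟩ | ⟨b1, b2, b3⟩ <;>
        subst b1 b2 b3
    · exfalso; omega
    · exfalso; omega
    · exfalso; omega
    · exact ⟨x1, Or.inr (Or.inr (Or.inr (by omega)))⟩

set_option maxHeartbeats 1000000 in
/-- Classification of exceptional patterns of length 8 on P_{P³}(O ⊕ O(3)):
with D₀ = (0,0), we have Dᵢ − Dⱼ ∈ Z for all 0 ≤ i < j ≤ 7 iff the tuple
(D₁,…,D₇) is one of the four listed families. -/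
theorem exceptional_pattern_classification_PP3_O3
    (D : Fin 8 → ℤ × ℤ) (hD0 : D 0 = (0, 0)) :
    (∀ i j : Fin 8, i < j → D i - D j ∈ czSetC) ↔
      ∃ a : ℤ,
        (D 1, D 2, D 3, D 4, D 5, D 6, D 7) =
          ((1, 0), (2, 0), (3, 0), (a, 1), (a + 1, 1), (a + 2, 1), (a + 3, 1)) ∨
        (D 1, D 2, D 3, D 4, D 5, D 6, D 7) =
          ((1, 0), (2, 0), (a, 1), (a + 1, 1), (a + 2, 1), (a + 3, 1), (6, 2)) ∨
        (D 1, D 2, D 3, D 4, D 5, D 6, D 7) =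
          ((1, 0), (a, 1), (a + 1, 1), (a + 2, 1), (a + 3, 1), (5, 2), (6, 2)) ∨
        (D 1, D 2, D 3, D 4, D 5, D 6, D 7) =
          ((a, 1), (a + 1, 1), (a + 2, 1), (a + 3, 1), (4, 2), (5, 2), (6, 2)) := by
  constructor
  · intro h
    have H : ∀ i j : Fin 8, i < j → CZ ((D i).1 - (D j).1) ((D i).2 - (D j).2) :=
      fun i j hij => (czSetC_iff (D i) (D j)).1 (h i j hij)
    obtain ⟨a, hc⟩ :=
      forward_helper (D 1).1 (D 2).1 (D 3).1 (D 4).1 (D 5).1 (D 6).1 (D 7).1 (D 1).2 (D 2).2 (D 3).2 (D 4).2 (D 5).2 (D 6).2 (D 7).2 (D 0).1 (D 0).2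
        (by rw [hD0]) (by rw [hD0]) (H 0 1 (by decide)) (H 0 2 (by decide)) (H 0 3 (by decide)) (H 0 4 (by decide)) (H 0 5 (by decide)) (H 0 6 (by decide)) (H 0 7 (by decide)) (H 1 2 (by decide)) (H 1 3 (by decide)) (H 1 4 (by decide)) (H 1 5 (by decide)) (H 1 6 (by decide)) (H 1 7 (by decide)) (H 2 3 (by decide)) (H 2 4 (by decide)) (H 2 5 (by decide)) (H 2 6 (by decide)) (H 2 7 (by decide)) (H 3 4 (by decide)) (H 3 5 (by decide)) (H 3 6 (by decide)) (H 3 7 (by decide)) (H 4 5 (by decide)) (H 4 6 (by decide)) (H 4 7 (by decide)) (H 5 6 (by decide)) (H 5 7 (by decide)) (H 6 7 (by decide))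
    clear H h
    refine ⟨a, ?_⟩
    simp only [Prod.mk.injEq, Prod.ext_iff]
    rcases hc with hc | hc | hc | hc
    · exact Or.inl (by omega)
    · exact Or.inr (Or.inl (by omega))
    · exact Or.inr (Or.inr (Or.inl (by omega)))
    · exact Or.inr (Or.inr (Or.inr (by omega)))
  · rintro ⟨a, hc⟩ i j hij
    simp only [Prod.mk.injEq] at hc
    rw [czSetC_iff]
    rcases hc with ⟨d1, d2, d3, d4, d5, d6, d7⟩ | ⟨d1, d2, d3, d4, d5, d6, d7⟩ |
      ⟨d1, d2, d3, d4, d5, d6, d7⟩ | ⟨d1, d2, d3, d4, d5, d6, d7⟩ <;>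
    fin_cases i <;> fin_cases j <;>
    first
      | exact absurd hij (by decide)
      | ((simp only [Fin.reduceFinMk, hD0, d1, d2, d3, d4, d5, d6, d7, CZ]; omega))
end

section
/- Let Z ⊆ ℤ × ℤ be the set of pairs (a,b) with b ∈ {−1, −2, −3} or (a,b) ∈ {(-1,0), (-2,-4)}. For a tuple (D₁,…,D₇) ∈ (ℤ×ℤ)⁷ set D₀ = (0,0), and call the tuple an exceptional pattern if Dᵢ − Dⱼ ∈ Z for all 0 ≤ i < j ≤ 7. Then (D₁,…,D₇) is an exceptional pattern if and only if there exist integers a, b, c such that (D₁,…,D₇) is one of the following two tuples: (1) ((1,0),(a,1),(a+1,1),(b,2),(b+1,2),(c,3),(c+1,3)); (2) ((a,1),(a+1,1),(b,2),(b+1,2),(c,3),(c+1,3),(2,4)). -/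
/-- The set of cohomologically zero classes on P_{P¹}(O ⊕ O ⊕ O ⊕ O(1)). -/
def czSetF : Set (ℤ × ℤ) :=
  {p | p.2 = -1 ∨ p.2 = -2 ∨ p.2 = -3 ∨ p = (-1, 0) ∨ p = (-2, -4)}

lemma mem_czSetF_iff (p : ℤ × ℤ) :
    p ∈ czSetF ↔ (-4 ≤ p.2 ∧ p.2 ≤ 0 ∧ (p.2 = 0 → p.1 = -1) ∧ (p.2 = -4 → p.1 = -2)) := by
  obtain ⟨a, b⟩ := p
  simp [czSetF, Prod.ext_iff]
  omega

/-- Classification of exceptional patterns of length 8 on P_{P¹}(O ⊕ O ⊕ O ⊕ O(1)):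
with D₀ = (0,0), we have Dᵢ − Dⱼ ∈ Z for all 0 ≤ i < j ≤ 7 iff the tuple
(D₁,…,D₇) is one of the two listed families. -/
theorem exceptional_pattern_classification_PP1_O1
    (D : Fin 8 → ℤ × ℤ) (hD0 : D 0 = (0, 0)) :
    (∀ i j : Fin 8, i < j → D i - D j ∈ czSetF) ↔
      ∃ a b c : ℤ,
        (D 1, D 2, D 3, D 4, D 5, D 6, D 7) =
          ((1, 0), (a, 1), (a + 1, 1), (b, 2), (b + 1, 2), (c, 3), (c + 1, 3)) ∨
        (D 1, D 2, D 3, D 4, D 5, D 6, D 7) =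
          ((a, 1), (a + 1, 1), (b, 2), (b + 1, 2), (c, 3), (c + 1, 3), (2, 4)) := by
  constructor
  · intro h
    have F : ∀ i j : Fin 8, i < j →
        (0 ≤ (D j).2 - (D i).2 ∧ (D j).2 - (D i).2 ≤ 4 ∧
         ((D j).2 - (D i).2 = 0 → (D j).1 = (D i).1 + 1) ∧
         ((D j).2 - (D i).2 = 4 → (D j).1 = (D i).1 + 2)) := by
      intro i j hij
      have := (mem_czSetF_iff _).1 (h i j hij)
      simp only [Prod.fst_sub, Prod.snd_sub] at this
      constructor; · omega
      constructor; · omega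
      constructor
      · intro h0; have := this.2.2.1 (by omega); omega
      · intro h4; have := this.2.2.2 (by omega); omega
    have hx0 : (D 0).1 = 0 := by rw [hD0]
    have hy0 : (D 0).2 = 0 := by rw [hD0]
    -- monotonicity facts
    have m0 : (D 0).2 ≤ (D 1).2 := by have := F 0 1 (by decide); omega
    have m1 : (D 1).2 ≤ (D 2).2 := by have := F 1 2 (by decide); omega
    have m2 : (D 2).2 ≤ (D 3).2 := by have := F 2 3 (by decide); omega
    have m3 : (D 3).2 ≤ (D 4).2 := by have := F 3 4 (by decide); omega
    have m4 : (D 4).2 ≤ (D 5).2 := by have := F 4 5 (by decide); omega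
    have m5 : (D 5).2 ≤ (D 6).2 := by have := F 5 6 (by decide); omega
    have m6 : (D 6).2 ≤ (D 7).2 := by have := F 6 7 (by decide); omega
    have mtop : (D 7).2 ≤ 4 := by have := F 0 7 (by decide); omega
    -- no three consecutive equal second coordinates
    have g0 : (D 0).2 + 1 ≤ (D 2).2 := by
      have a1 := F 0 1 (by decide); have a2 := F 1 2 (by decide)
      have a3 := F 0 2 (by decide); omega
    have g1 : (D 1).2 + 1 ≤ (D 3).2 := by
      have a1 := F 1 2 (by decide); have a2 := F 2 3 (by decide)
      have a3 := F 1 3 (by decide); omega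
    have g2 : (D 2).2 + 1 ≤ (D 4).2 := by
      have a1 := F 2 3 (by decide); have a2 := F 3 4 (by decide)
      have a3 := F 2 4 (by decide); omega
    have g3 : (D 3).2 + 1 ≤ (D 5).2 := by
      have a1 := F 3 4 (by decide); have a2 := F 4 5 (by decide)
      have a3 := F 3 5 (by decide); omega
    have g4 : (D 4).2 + 1 ≤ (D 6).2 := by
      have a1 := F 4 5 (by decide); have a2 := F 5 6 (by decide)
      have a3 := F 4 6 (by decide); omega
    have g5 : (D 5).2 + 1 ≤ (D 7).2 := by
      have a1 := F 5 6 (by decide); have a2 := F 6 7 (by decide)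
      have a3 := F 5 7 (by decide); omega
    by_cases hy : (D 7).2 = 4
    · -- family 2
      have hy1 : 1 ≤ (D 1).2 := by
        have a1 := F 0 1 (by decide); have a2 := F 0 7 (by decide)
        have a3 := F 1 7 (by decide); omega
      have hy6 : (D 6).2 ≤ 3 := by
        have a1 := F 6 7 (by decide); have a2 := F 0 7 (by decide)
        have a3 := F 0 6 (by decide); omega
      have e1 : (D 1).2 = 1 := by omega
      have e2 : (D 2).2 = 1 := by omega
      have e3 : (D 3).2 = 2 := by omega
      have e4 : (D 4).2 = 2 := by omega
      have e5 : (D 5).2 = 3 := by omega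
      have e6 : (D 6).2 = 3 := by omega
      have x2 : (D 2).1 = (D 1).1 + 1 := by have := F 1 2 (by decide); omega
      have x4 : (D 4).1 = (D 3).1 + 1 := by have := F 3 4 (by decide); omega
      have x6 : (D 6).1 = (D 5).1 + 1 := by have := F 5 6 (by decide); omega
      have x7 : (D 7).1 = 2 := by have := F 0 7 (by decide); omega
      refine ⟨(D 1).1, (D 3).1, (D 5).1, Or.inr ?_⟩
      have p1 : D 1 = ((D 1).1, 1) := Prod.ext_iff.mpr ⟨rfl, e1⟩
      have p2 : D 2 = ((D 1).1 + 1, 1) := Prod.ext_iff.mpr ⟨x2, e2⟩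
      have p3 : D 3 = ((D 3).1, 2) := Prod.ext_iff.mpr ⟨rfl, e3⟩
      have p4 : D 4 = ((D 3).1 + 1, 2) := Prod.ext_iff.mpr ⟨x4, e4⟩
      have p5 : D 5 = ((D 5).1, 3) := Prod.ext_iff.mpr ⟨rfl, e5⟩
      have p6 : D 6 = ((D 5).1 + 1, 3) := Prod.ext_iff.mpr ⟨x6, e6⟩
      have p7 : D 7 = (2, 4) := Prod.ext_iff.mpr ⟨x7, hy⟩
      rw [p1, p2, p3, p4, p5, p6, p7]
    · -- family 1
      have e1 : (D 1).2 = 0 := by omega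
      have e2 : (D 2).2 = 1 := by omega
      have e3 : (D 3).2 = 1 := by omega
      have e4 : (D 4).2 = 2 := by omega
      have e5 : (D 5).2 = 2 := by omega
      have e6 : (D 6).2 = 3 := by omega
      have e7 : (D 7).2 = 3 := by omega
      have x1 : (D 1).1 = 1 := by have := F 0 1 (by decide); omega
      have x3 : (D 3).1 = (D 2).1 + 1 := by have := F 2 3 (by decide); omega
      have x5 : (D 5).1 = (D 4).1 + 1 := by have := F 4 5 (by decide); omega
      have x7 : (D 7).1 = (D 6).1 + 1 := by have := F 6 7 (by decide); omega
      refine ⟨(D 2).1, (D 4).1, (D 6).1, Or.inl ?_⟩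
      have p1 : D 1 = (1, 0) := Prod.ext_iff.mpr ⟨x1, e1⟩
      have p2 : D 2 = ((D 2).1, 1) := Prod.ext_iff.mpr ⟨rfl, e2⟩
      have p3 : D 3 = ((D 2).1 + 1, 1) := Prod.ext_iff.mpr ⟨x3, e3⟩
      have p4 : D 4 = ((D 4).1, 2) := Prod.ext_iff.mpr ⟨rfl, e4⟩
      have p5 : D 5 = ((D 4).1 + 1, 2) := Prod.ext_iff.mpr ⟨x5, e5⟩
      have p6 : D 6 = ((D 6).1, 3) := Prod.ext_iff.mpr ⟨rfl, e6⟩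
      have p7 : D 7 = ((D 6).1 + 1, 3) := Prod.ext_iff.mpr ⟨x7, e7⟩
      rw [p1, p2, p3, p4, p5, p6, p7]
  · rintro ⟨a, b, c, hc | hc⟩ <;>
    · simp only [Prod.mk.injEq] at hc
      obtain ⟨e1, e2, e3, e4, e5, e6, e7⟩ := hc
      have m01 : D 0 - D 1 ∈ czSetF := by
        rw [hD0, e1]
        simp only [czSetF, Set.mem_setOf_eq, Prod.mk_sub_mk, Prod.mk.injEq]
        omega
      have m02 : D 0 - D 2 ∈ czSetF := by
        rw [hD0, e2]
        simp only [czSetF, Set.mem_setOf_eq, Prod.mk_sub_mk, Prod.mk.injEq]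
        omega
      have m03 : D 0 - D 3 ∈ czSetF := by
        rw [hD0, e3]
        simp only [czSetF, Set.mem_setOf_eq, Prod.mk_sub_mk, Prod.mk.injEq]
        omega
      have m04 : D 0 - D 4 ∈ czSetF := by
        rw [hD0, e4]
        simp only [czSetF, Set.mem_setOf_eq, Prod.mk_sub_mk, Prod.mk.injEq]
        omega
      have m05 : D 0 - D 5 ∈ czSetF := by
        rw [hD0, e5]
        simp only [czSetF, Set.mem_setOf_eq, Prod.mk_sub_mk, Prod.mk.injEq]
        omega
      have m06 : D 0 - D 6 ∈ czSetF := by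
        rw [hD0, e6]
        simp only [czSetF, Set.mem_setOf_eq, Prod.mk_sub_mk, Prod.mk.injEq]
        omega
      have m07 : D 0 - D 7 ∈ czSetF := by
        rw [hD0, e7]
        simp only [czSetF, Set.mem_setOf_eq, Prod.mk_sub_mk, Prod.mk.injEq]
        omega
      have m12 : D 1 - D 2 ∈ czSetF := by
        rw [e1, e2]
        simp only [czSetF, Set.mem_setOf_eq, Prod.mk_sub_mk, Prod.mk.injEq]
        omega
      have m13 : D 1 - D 3 ∈ czSetF := by
        rw [e1, e3]
        simp only [czSetF, Set.mem_setOf_eq, Prod.mk_sub_mk, Prod.mk.injEq]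
        omega
      have m14 : D 1 - D 4 ∈ czSetF := by
        rw [e1, e4]
        simp only [czSetF, Set.mem_setOf_eq, Prod.mk_sub_mk, Prod.mk.injEq]
        omega
      have m15 : D 1 - D 5 ∈ czSetF := by
        rw [e1, e5]
        simp only [czSetF, Set.mem_setOf_eq, Prod.mk_sub_mk, Prod.mk.injEq]
        omega
      have m16 : D 1 - D 6 ∈ czSetF := by
        rw [e1, e6]
        simp only [czSetF, Set.mem_setOf_eq, Prod.mk_sub_mk, Prod.mk.injEq]
        omega
      have m17 : D 1 - D 7 ∈ czSetF := by
        rw [e1, e7]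
        simp only [czSetF, Set.mem_setOf_eq, Prod.mk_sub_mk, Prod.mk.injEq]
        omega
      have m23 : D 2 - D 3 ∈ czSetF := by
        rw [e2, e3]
        simp only [czSetF, Set.mem_setOf_eq, Prod.mk_sub_mk, Prod.mk.injEq]
        omega
      have m24 : D 2 - D 4 ∈ czSetF := by
        rw [e2, e4]
        simp only [czSetF, Set.mem_setOf_eq, Prod.mk_sub_mk, Prod.mk.injEq]
        omega
      have m25 : D 2 - D 5 ∈ czSetF := by
        rw [e2, e5]
        simp only [czSetF, Set.mem_setOf_eq, Prod.mk_sub_mk, Prod.mk.injEq]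
        omega
      have m26 : D 2 - D 6 ∈ czSetF := by
        rw [e2, e6]
        simp only [czSetF, Set.mem_setOf_eq, Prod.mk_sub_mk, Prod.mk.injEq]
        omega
      have m27 : D 2 - D 7 ∈ czSetF := by
        rw [e2, e7]
        simp only [czSetF, Set.mem_setOf_eq, Prod.mk_sub_mk, Prod.mk.injEq]
        omega
      have m34 : D 3 - D 4 ∈ czSetF := by
        rw [e3, e4]
        simp only [czSetF, Set.mem_setOf_eq, Prod.mk_sub_mk, Prod.mk.injEq]
        omega
      have m35 : D 3 - D 5 ∈ czSetF := by
        rw [e3, e5]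
        simp only [czSetF, Set.mem_setOf_eq, Prod.mk_sub_mk, Prod.mk.injEq]
        omega
      have m36 : D 3 - D 6 ∈ czSetF := by
        rw [e3, e6]
        simp only [czSetF, Set.mem_setOf_eq, Prod.mk_sub_mk, Prod.mk.injEq]
        omega
      have m37 : D 3 - D 7 ∈ czSetF := by
        rw [e3, e7]
        simp only [czSetF, Set.mem_setOf_eq, Prod.mk_sub_mk, Prod.mk.injEq]
        omega
      have m45 : D 4 - D 5 ∈ czSetF := by
        rw [e4, e5]
        simp only [czSetF, Set.mem_setOf_eq, Prod.mk_sub_mk, Prod.mk.injEq]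
        omega
      have m46 : D 4 - D 6 ∈ czSetF := by
        rw [e4, e6]
        simp only [czSetF, Set.mem_setOf_eq, Prod.mk_sub_mk, Prod.mk.injEq]
        omega
      have m47 : D 4 - D 7 ∈ czSetF := by
        rw [e4, e7]
        simp only [czSetF, Set.mem_setOf_eq, Prod.mk_sub_mk, Prod.mk.injEq]
        omega
      have m56 : D 5 - D 6 ∈ czSetF := by
        rw [e5, e6]
        simp only [czSetF, Set.mem_setOf_eq, Prod.mk_sub_mk, Prod.mk.injEq]
        omega
      have m57 : D 5 - D 7 ∈ czSetF := by
        rw [e5, e7]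
        simp only [czSetF, Set.mem_setOf_eq, Prod.mk_sub_mk, Prod.mk.injEq]
        omega
      have m67 : D 6 - D 7 ∈ czSetF := by
        rw [e6, e7]
        simp only [czSetF, Set.mem_setOf_eq, Prod.mk_sub_mk, Prod.mk.injEq]
        omega
      intro i j hij
      fin_cases i <;> fin_cases j <;>
        first
          | exact absurd hij (by decide)
          | exact m01 | exact m02 | exact m03 | exact m04 | exact m05 | exact m06 | exact m07 | exact m12 | exact m13 | exact m14 | exact m15 | exact m16 | exact m17 | exact m23 | exact m24 | exact m25 | exact m26 | exact m27 | exact m34 | exact m35 | exact m36 | exact m37 | exact m45 | exact m46 | exact m47 | exact m56 | exact m57 | exact m67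
end

section
/- Let Z ⊆ ℤ × ℤ be the set of pairs (a,b) with b = −1 or b = −2 or (a,b) ∈ {(-1,0), (-2,0), (-3,-3), (-4,-3)}. For a tuple (D₁,…,D₈) ∈ (ℤ×ℤ)⁸ set D₀ = (0,0), and call the tuple an exceptional pattern if Dᵢ − Dⱼ ∈ Z for all 0 ≤ i < j ≤ 8. Then (D₁,…,D₈) is an exceptional pattern if and only if there exist integers a, b such that (D₁,…,D₈) is one of the following three tuples: (1) ((1,0),(2,0),(a,1),(a+1,1),(a+2,1),(b,2),(b+1,2),(b+2,2)); (2) ((1,0),(a,1),(a+1,1),(a+2,1),(b,2),(b+1,2),(b+2,2),(4,3)); (3) ((a,1),(a+1,1),(a+2,1),(b,2),(b+1,2),(b+2,2),(3,3),(4,3)). -/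
/-- The set of cohomologically zero classes on P_{P²}(O ⊕ O ⊕ O(2)). -/
def czSetG : Set (ℤ × ℤ) :=
  {p | p.2 = -1 ∨ p.2 = -2 ∨ p = (-1, 0) ∨ p = (-2, 0) ∨ p = (-3, -3) ∨ p = (-4, -3)}

/-- Arithmetic unfolding of membership in `czSetG` of a difference. -/
def Rg (p q : ℤ × ℤ) : Prop :=
  p.2 - q.2 = -1 ∨ p.2 - q.2 = -2 ∨
  (p.1 - q.1 = -1 ∧ p.2 - q.2 = 0) ∨ (p.1 - q.1 = -2 ∧ p.2 - q.2 = 0) ∨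
  (p.1 - q.1 = -3 ∧ p.2 - q.2 = -3) ∨ (p.1 - q.1 = -4 ∧ p.2 - q.2 = -3)

lemma mem_iff_Rg (p q : ℤ × ℤ) : p - q ∈ czSetG ↔ Rg p q := by
  simp [czSetG, Rg, Prod.ext_iff]

lemma Rg_y {p q : ℤ × ℤ} (h : Rg p q) : p.2 ≤ q.2 ∧ q.2 ≤ p.2 + 3 := by
  unfold Rg at h; omega

lemma Rg0 {p q : ℤ × ℤ} (h : Rg p q) (hy : p.2 = q.2) :
    q.1 - p.1 = 1 ∨ q.1 - p.1 = 2 := by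
  unfold Rg at h; omega

lemma Rg3 {p q : ℤ × ℤ} (h : Rg p q) (hy : p.2 + 3 = q.2) :
    q.1 - p.1 = 3 ∨ q.1 - p.1 = 4 := by
  unfold Rg at h; omega

lemma Rg_jump {p q r s : ℤ × ℤ} (h1 : Rg p q) (h2 : Rg p r) (h3 : Rg p s)
    (h4 : Rg q r) (h5 : Rg q s) (h6 : Rg r s) : p.2 + 1 ≤ s.2 := by
  unfold Rg at h1 h2 h3 h4 h5 h6; omega

set_option maxHeartbeats 4000000 in
lemma ypat (y0 y1 y2 y3 y4 y5 y6 y7 y8 : ℤ)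
    (h0 : y0 = 0)
    (m0 : y0 ≤ y1) (m1 : y1 ≤ y2) (m2 : y2 ≤ y3) (m3 : y3 ≤ y4)
    (m4 : y4 ≤ y5) (m5 : y5 ≤ y6) (m6 : y6 ≤ y7) (m7 : y7 ≤ y8)
    (m8 : y8 ≤ 3)
    (j0 : y0 + 1 ≤ y3) (j1 : y1 + 1 ≤ y4) (j2 : y2 + 1 ≤ y5)
    (j3 : y3 + 1 ≤ y6) (j4 : y4 + 1 ≤ y7) (j5 : y5 + 1 ≤ y8) :
    (y1 = 1 ∧ y2 = 1 ∧ y3 = 2 ∧ y4 = 2 ∧ y5 = 2 ∧ y6 = 3 ∧ y7 = 3 ∧ y8 = 3) ∨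
    (y1 = 1 ∧ y2 = 1 ∧ y3 = 1 ∧ y4 = 2 ∧ y5 = 2 ∧ y6 = 3 ∧ y7 = 3 ∧ y8 = 3) ∨
    (y1 = 1 ∧ y2 = 1 ∧ y3 = 1 ∧ y4 = 2 ∧ y5 = 2 ∧ y6 = 2 ∧ y7 = 3 ∧ y8 = 3) ∨
    (y1 = 0 ∧ y2 = 1 ∧ y3 = 2 ∧ y4 = 2 ∧ y5 = 2 ∧ y6 = 3 ∧ y7 = 3 ∧ y8 = 3) ∨
    (y1 = 0 ∧ y2 = 1 ∧ y3 = 1 ∧ y4 = 2 ∧ y5 = 2 ∧ y6 = 3 ∧ y7 = 3 ∧ y8 = 3) ∨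
    (y1 = 0 ∧ y2 = 1 ∧ y3 = 1 ∧ y4 = 2 ∧ y5 = 2 ∧ y6 = 2 ∧ y7 = 3 ∧ y8 = 3) ∨
    (y1 = 0 ∧ y2 = 1 ∧ y3 = 1 ∧ y4 = 1 ∧ y5 = 2 ∧ y6 = 3 ∧ y7 = 3 ∧ y8 = 3) ∨
    (y1 = 0 ∧ y2 = 1 ∧ y3 = 1 ∧ y4 = 1 ∧ y5 = 2 ∧ y6 = 2 ∧ y7 = 3 ∧ y8 = 3) ∨
    (y1 = 0 ∧ y2 = 1 ∧ y3 = 1 ∧ y4 = 1 ∧ y5 = 2 ∧ y6 = 2 ∧ y7 = 2 ∧ y8 = 3) ∨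
    (y1 = 0 ∧ y2 = 0 ∧ y3 = 2 ∧ y4 = 2 ∧ y5 = 2 ∧ y6 = 3 ∧ y7 = 3 ∧ y8 = 3) ∨
    (y1 = 0 ∧ y2 = 0 ∧ y3 = 1 ∧ y4 = 2 ∧ y5 = 2 ∧ y6 = 3 ∧ y7 = 3 ∧ y8 = 3) ∨
    (y1 = 0 ∧ y2 = 0 ∧ y3 = 1 ∧ y4 = 2 ∧ y5 = 2 ∧ y6 = 2 ∧ y7 = 3 ∧ y8 = 3) ∨
    (y1 = 0 ∧ y2 = 0 ∧ y3 = 1 ∧ y4 = 1 ∧ y5 = 2 ∧ y6 = 3 ∧ y7 = 3 ∧ y8 = 3) ∨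
    (y1 = 0 ∧ y2 = 0 ∧ y3 = 1 ∧ y4 = 1 ∧ y5 = 2 ∧ y6 = 2 ∧ y7 = 3 ∧ y8 = 3) ∨
    (y1 = 0 ∧ y2 = 0 ∧ y3 = 1 ∧ y4 = 1 ∧ y5 = 2 ∧ y6 = 2 ∧ y7 = 2 ∧ y8 = 3) ∨
    (y1 = 0 ∧ y2 = 0 ∧ y3 = 1 ∧ y4 = 1 ∧ y5 = 1 ∧ y6 = 3 ∧ y7 = 3 ∧ y8 = 3) ∨
    (y1 = 0 ∧ y2 = 0 ∧ y3 = 1 ∧ y4 = 1 ∧ y5 = 1 ∧ y6 = 2 ∧ y7 = 3 ∧ y8 = 3) ∨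
    (y1 = 0 ∧ y2 = 0 ∧ y3 = 1 ∧ y4 = 1 ∧ y5 = 1 ∧ y6 = 2 ∧ y7 = 2 ∧ y8 = 3) ∨
    (y1 = 0 ∧ y2 = 0 ∧ y3 = 1 ∧ y4 = 1 ∧ y5 = 1 ∧ y6 = 2 ∧ y7 = 2 ∧ y8 = 2) := by
  subst h0
  have b1 : 0 ≤ y1 := m0
  have b2 : 0 ≤ y2 := by omega
  have b3 : 0 ≤ y3 := by omega
  have b4 : 0 ≤ y4 := by omega
  have b5 : 0 ≤ y5 := by omega
  have b6 : 0 ≤ y6 := by omega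
  have b7 : 0 ≤ y7 := by omega
  have b8 : 0 ≤ y8 := by omega
  have c1 : y1 ≤ 3 := by omega
  have c2 : y2 ≤ 3 := by omega
  have c3 : y3 ≤ 3 := by omega
  have c4 : y4 ≤ 3 := by omega
  have c5 : y5 ≤ 3 := by omega
  have c6 : y6 ≤ 3 := by omega
  have c7 : y7 ≤ 3 := by omega
  interval_cases y1 <;> interval_cases y2 <;> interval_cases y3 <;>
    interval_cases y4 <;> interval_cases y5 <;> interval_cases y6 <;>
    interval_cases y7 <;> interval_cases y8 <;> simp

set_option maxHeartbeats 1000000 in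
/-- Classification of exceptional patterns of length 9 on P_{P²}(O ⊕ O ⊕ O(2)):
with D₀ = (0,0), we have Dᵢ − Dⱼ ∈ Z for all 0 ≤ i < j ≤ 8 iff the tuple
(D₁,…,D₈) is one of the three listed families. -/
theorem exceptional_pattern_classification_PP2_OO2
    (D : Fin 9 → ℤ × ℤ) (hD0 : D 0 = (0, 0)) :
    (∀ i j : Fin 9, i < j → D i - D j ∈ czSetG) ↔
      ∃ a b : ℤ,
        (D 1, D 2, D 3, D 4, D 5, D 6, D 7, D 8) =
          ((1, 0), (2, 0), (a, 1), (a + 1, 1), (a + 2, 1), (b, 2), (b + 1, 2), (b + 2, 2)) ∨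
        (D 1, D 2, D 3, D 4, D 5, D 6, D 7, D 8) =
          ((1, 0), (a, 1), (a + 1, 1), (a + 2, 1), (b, 2), (b + 1, 2), (b + 2, 2), (4, 3)) ∨
        (D 1, D 2, D 3, D 4, D 5, D 6, D 7, D 8) =
          ((a, 1), (a + 1, 1), (a + 2, 1), (b, 2), (b + 1, 2), (b + 2, 2), (3, 3), (4, 3)) := by
  constructor
  · intro H
    have hx0 : (D 0).1 = 0 := by rw [hD0]
    have hy0 : (D 0).2 = 0 := by rw [hD0]
    have r01 := (mem_iff_Rg _ _).1 (H 0 1 (by decide))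
    have r02 := (mem_iff_Rg _ _).1 (H 0 2 (by decide))
    have r03 := (mem_iff_Rg _ _).1 (H 0 3 (by decide))
    have r04 := (mem_iff_Rg _ _).1 (H 0 4 (by decide))
    have r05 := (mem_iff_Rg _ _).1 (H 0 5 (by decide))
    have r06 := (mem_iff_Rg _ _).1 (H 0 6 (by decide))
    have r07 := (mem_iff_Rg _ _).1 (H 0 7 (by decide))
    have r08 := (mem_iff_Rg _ _).1 (H 0 8 (by decide))
    have r12 := (mem_iff_Rg _ _).1 (H 1 2 (by decide))
    have r13 := (mem_iff_Rg _ _).1 (H 1 3 (by decide))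
    have r14 := (mem_iff_Rg _ _).1 (H 1 4 (by decide))
    have r15 := (mem_iff_Rg _ _).1 (H 1 5 (by decide))
    have r16 := (mem_iff_Rg _ _).1 (H 1 6 (by decide))
    have r17 := (mem_iff_Rg _ _).1 (H 1 7 (by decide))
    have r18 := (mem_iff_Rg _ _).1 (H 1 8 (by decide))
    have r23 := (mem_iff_Rg _ _).1 (H 2 3 (by decide))
    have r24 := (mem_iff_Rg _ _).1 (H 2 4 (by decide))
    have r25 := (mem_iff_Rg _ _).1 (H 2 5 (by decide))
    have r26 := (mem_iff_Rg _ _).1 (H 2 6 (by decide))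
    have r27 := (mem_iff_Rg _ _).1 (H 2 7 (by decide))
    have r28 := (mem_iff_Rg _ _).1 (H 2 8 (by decide))
    have r34 := (mem_iff_Rg _ _).1 (H 3 4 (by decide))
    have r35 := (mem_iff_Rg _ _).1 (H 3 5 (by decide))
    have r36 := (mem_iff_Rg _ _).1 (H 3 6 (by decide))
    have r37 := (mem_iff_Rg _ _).1 (H 3 7 (by decide))
    have r38 := (mem_iff_Rg _ _).1 (H 3 8 (by decide))
    have r45 := (mem_iff_Rg _ _).1 (H 4 5 (by decide))
    have r46 := (mem_iff_Rg _ _).1 (H 4 6 (by decide))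
    have r47 := (mem_iff_Rg _ _).1 (H 4 7 (by decide))
    have r48 := (mem_iff_Rg _ _).1 (H 4 8 (by decide))
    have r56 := (mem_iff_Rg _ _).1 (H 5 6 (by decide))
    have r57 := (mem_iff_Rg _ _).1 (H 5 7 (by decide))
    have r58 := (mem_iff_Rg _ _).1 (H 5 8 (by decide))
    have r67 := (mem_iff_Rg _ _).1 (H 6 7 (by decide))
    have r68 := (mem_iff_Rg _ _).1 (H 6 8 (by decide))
    have r78 := (mem_iff_Rg _ _).1 (H 7 8 (by decide))
    have m0 := Rg_y r01
    have m1 := Rg_y r12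
    have m2 := Rg_y r23
    have m3 := Rg_y r34
    have m4 := Rg_y r45
    have m5 := Rg_y r56
    have m6 := Rg_y r67
    have m7 := Rg_y r78
    have m08 := Rg_y r08
    have jp0 := Rg_jump r01 r02 r03 r12 r13 r23
    have jp1 := Rg_jump r12 r13 r14 r23 r24 r34
    have jp2 := Rg_jump r23 r24 r25 r34 r35 r45
    have jp3 := Rg_jump r34 r35 r36 r45 r46 r56
    have jp4 := Rg_jump r45 r46 r47 r56 r57 r67
    have jp5 := Rg_jump r56 r57 r58 r67 r68 r78
    have hpat := ypat (D 0).2 (D 1).2 (D 2).2 (D 3).2 (D 4).2 (D 5).2 (D 6).2 (D 7).2 (D 8).2 hy0 m0.1 m1.1 m2.1 m3.1 m4.1 m5.1 m6.1 m7.1 (by omega) jp0 jp1 jp2 jp3 jp4 jp5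
    rcases hpat with ⟨q1,q2,q3,q4,q5,q6,q7,q8⟩ | ⟨q1,q2,q3,q4,q5,q6,q7,q8⟩ | ⟨q1,q2,q3,q4,q5,q6,q7,q8⟩ | ⟨q1,q2,q3,q4,q5,q6,q7,q8⟩ | ⟨q1,q2,q3,q4,q5,q6,q7,q8⟩ | ⟨q1,q2,q3,q4,q5,q6,q7,q8⟩ | ⟨q1,q2,q3,q4,q5,q6,q7,q8⟩ | ⟨q1,q2,q3,q4,q5,q6,q7,q8⟩ | ⟨q1,q2,q3,q4,q5,q6,q7,q8⟩ | ⟨q1,q2,q3,q4,q5,q6,q7,q8⟩ | ⟨q1,q2,q3,q4,q5,q6,q7,q8⟩ | ⟨q1,q2,q3,q4,q5,q6,q7,q8⟩ | ⟨q1,q2,q3,q4,q5,q6,q7,q8⟩ | ⟨q1,q2,q3,q4,q5,q6,q7,q8⟩ | ⟨q1,q2,q3,q4,q5,q6,q7,q8⟩ | ⟨q1,q2,q3,q4,q5,q6,q7,q8⟩ | ⟨q1,q2,q3,q4,q5,q6,q7,q8⟩ | ⟨q1,q2,q3,q4,q5,q6,q7,q8⟩ | ⟨q1,q2,q3,q4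,q5,q6,q7,q8⟩
    · have b06 := Rg3 r06 (by omega)
      have b07 := Rg3 r07 (by omega)
      have b08 := Rg3 r08 (by omega)
      have a67 := Rg0 r67 (by omega)
      have a78 := Rg0 r78 (by omega)
      exfalso; omega
    · have b06 := Rg3 r06 (by omega)
      have b07 := Rg3 r07 (by omega)
      have b08 := Rg3 r08 (by omega)
      have a67 := Rg0 r67 (by omega)
      have a78 := Rg0 r78 (by omega)
      exfalso; omega
    · have b07 := Rg3 r07 (by omega)
      have b08 := Rg3 r08 (by omega)
      have a78 := Rg0 r78 (by omega)
      have a12 := Rg0 r12 (by omega)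
      have a13 := Rg0 r13 (by omega)
      have a23 := Rg0 r23 (by omega)
      have a45 := Rg0 r45 (by omega)
      have a46 := Rg0 r46 (by omega)
      have a56 := Rg0 r56 (by omega)
      exact ⟨(D 1).1, (D 4).1, Or.inr (Or.inr (by simp only [Prod.ext_iff]; norm_num; omega))⟩
    · have b06 := Rg3 r06 (by omega)
      have b07 := Rg3 r07 (by omega)
      have b08 := Rg3 r08 (by omega)
      have a67 := Rg0 r67 (by omega)
      have a78 := Rg0 r78 (by omega)
      exfalso; omega
    · have b06 := Rg3 r06 (by omega)
      have b07 := Rg3 r07 (by omega)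
      have b08 := Rg3 r08 (by omega)
      have a67 := Rg0 r67 (by omega)
      have a78 := Rg0 r78 (by omega)
      exfalso; omega
    · have a01 := Rg0 r01 (by omega)
      have b07 := Rg3 r07 (by omega)
      have b08 := Rg3 r08 (by omega)
      have b17 := Rg3 r17 (by omega)
      have a78 := Rg0 r78 (by omega)
      exfalso; omega
    · have b06 := Rg3 r06 (by omega)
      have b07 := Rg3 r07 (by omega)
      have b08 := Rg3 r08 (by omega)
      have a67 := Rg0 r67 (by omega)
      have a78 := Rg0 r78 (by omega)
      exfalso; omega
    · have a01 := Rg0 r01 (by omega)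
      have b07 := Rg3 r07 (by omega)
      have b08 := Rg3 r08 (by omega)
      have b17 := Rg3 r17 (by omega)
      have a78 := Rg0 r78 (by omega)
      exfalso; omega
    · have a01 := Rg0 r01 (by omega)
      have b08 := Rg3 r08 (by omega)
      have b18 := Rg3 r18 (by omega)
      have a23 := Rg0 r23 (by omega)
      have a24 := Rg0 r24 (by omega)
      have a34 := Rg0 r34 (by omega)
      have a56 := Rg0 r56 (by omega)
      have a57 := Rg0 r57 (by omega)
      have a67 := Rg0 r67 (by omega)
      exact ⟨(D 2).1, (D 5).1, Or.inr (Or.inl (by simp only [Prod.ext_iff]; norm_num; omega))⟩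
    · have b06 := Rg3 r06 (by omega)
      have b07 := Rg3 r07 (by omega)
      have b08 := Rg3 r08 (by omega)
      have a67 := Rg0 r67 (by omega)
      have a78 := Rg0 r78 (by omega)
      exfalso; omega
    · have b06 := Rg3 r06 (by omega)
      have b07 := Rg3 r07 (by omega)
      have b08 := Rg3 r08 (by omega)
      have a67 := Rg0 r67 (by omega)
      have a78 := Rg0 r78 (by omega)
      exfalso; omega
    · have a01 := Rg0 r01 (by omega)
      have a02 := Rg0 r02 (by omega)
      have a12 := Rg0 r12 (by omega)
      have b0 := Rg3 r07 (by omega)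
      have b2 := Rg3 r27 (by omega)
      exfalso; omega
    · have b06 := Rg3 r06 (by omega)
      have b07 := Rg3 r07 (by omega)
      have b08 := Rg3 r08 (by omega)
      have a67 := Rg0 r67 (by omega)
      have a78 := Rg0 r78 (by omega)
      exfalso; omega
    · have a01 := Rg0 r01 (by omega)
      have a02 := Rg0 r02 (by omega)
      have a12 := Rg0 r12 (by omega)
      have b0 := Rg3 r07 (by omega)
      have b2 := Rg3 r27 (by omega)
      exfalso; omega
    · have a01 := Rg0 r01 (by omega)
      have a02 := Rg0 r02 (by omega)
      have a12 := Rg0 r12 (by omega)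
      have b0 := Rg3 r08 (by omega)
      have b2 := Rg3 r28 (by omega)
      exfalso; omega
    · have b06 := Rg3 r06 (by omega)
      have b07 := Rg3 r07 (by omega)
      have b08 := Rg3 r08 (by omega)
      have a67 := Rg0 r67 (by omega)
      have a78 := Rg0 r78 (by omega)
      exfalso; omega
    · have a01 := Rg0 r01 (by omega)
      have a02 := Rg0 r02 (by omega)
      have a12 := Rg0 r12 (by omega)
      have b0 := Rg3 r07 (by omega)
      have b2 := Rg3 r27 (by omega)
      exfalso; omega
    · have a01 := Rg0 r01 (by omega)
      have a02 := Rg0 r02 (by omega)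
      have a12 := Rg0 r12 (by omega)
      have b0 := Rg3 r08 (by omega)
      have b2 := Rg3 r28 (by omega)
      exfalso; omega
    · have a01 := Rg0 r01 (by omega)
      have a02 := Rg0 r02 (by omega)
      have a12 := Rg0 r12 (by omega)
      have a34 := Rg0 r34 (by omega)
      have a35 := Rg0 r35 (by omega)
      have a45 := Rg0 r45 (by omega)
      have a67 := Rg0 r67 (by omega)
      have a68 := Rg0 r68 (by omega)
      have a78 := Rg0 r78 (by omega)
      exact ⟨(D 3).1, (D 6).1, Or.inl (by simp only [Prod.ext_iff]; norm_num; omega)⟩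
  · rintro ⟨a, b, h | h | h⟩
    · simp only [Prod.mk.injEq] at h
      obtain ⟨e1, e2, e3, e4, e5, e6, e7, e8⟩ := h
      have f0 : ∀ h, D ⟨0, h⟩ = ((0, 0) : ℤ × ℤ) := fun _ => hD0
      have f1 : ∀ h, D ⟨1, h⟩ = ((1, 0) : ℤ × ℤ) := fun _ => e1
      have f2 : ∀ h, D ⟨2, h⟩ = ((2, 0) : ℤ × ℤ) := fun _ => e2
      have f3 : ∀ h, D ⟨3, h⟩ = ((a, 1) : ℤ × ℤ) := fun _ => e3
      have f4 : ∀ h, D ⟨4, h⟩ = ((a + 1, 1) : ℤ × ℤ) := fun _ => e4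
      have f5 : ∀ h, D ⟨5, h⟩ = ((a + 2, 1) : ℤ × ℤ) := fun _ => e5
      have f6 : ∀ h, D ⟨6, h⟩ = ((b, 2) : ℤ × ℤ) := fun _ => e6
      have f7 : ∀ h, D ⟨7, h⟩ = ((b + 1, 2) : ℤ × ℤ) := fun _ => e7
      have f8 : ∀ h, D ⟨8, h⟩ = ((b + 2, 2) : ℤ × ℤ) := fun _ => e8
      intro i j hij
      rcases i with ⟨iv, hi⟩
      rcases j with ⟨jv, hj⟩
      have hv : iv < jv := hij
      rw [mem_iff_Rg]
      interval_cases iv <;> interval_cases jv <;>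
        first
          | omega
          | (simp only [f0, f1, f2, f3, f4, f5, f6, f7, f8, Rg]; norm_num)
    · simp only [Prod.mk.injEq] at h
      obtain ⟨e1, e2, e3, e4, e5, e6, e7, e8⟩ := h
      have f0 : ∀ h, D ⟨0, h⟩ = ((0, 0) : ℤ × ℤ) := fun _ => hD0
      have f1 : ∀ h, D ⟨1, h⟩ = ((1, 0) : ℤ × ℤ) := fun _ => e1
      have f2 : ∀ h, D ⟨2, h⟩ = ((a, 1) : ℤ × ℤ) := fun _ => e2
      have f3 : ∀ h, D ⟨3, h⟩ = ((a + 1, 1) : ℤ × ℤ) := fun _ => e3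
      have f4 : ∀ h, D ⟨4, h⟩ = ((a + 2, 1) : ℤ × ℤ) := fun _ => e4
      have f5 : ∀ h, D ⟨5, h⟩ = ((b, 2) : ℤ × ℤ) := fun _ => e5
      have f6 : ∀ h, D ⟨6, h⟩ = ((b + 1, 2) : ℤ × ℤ) := fun _ => e6
      have f7 : ∀ h, D ⟨7, h⟩ = ((b + 2, 2) : ℤ × ℤ) := fun _ => e7
      have f8 : ∀ h, D ⟨8, h⟩ = ((4, 3) : ℤ × ℤ) := fun _ => e8
      intro i j hij
      rcases i with ⟨iv, hi⟩
      rcases j with ⟨jv, hj⟩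
      have hv : iv < jv := hij
      rw [mem_iff_Rg]
      interval_cases iv <;> interval_cases jv <;>
        first
          | omega
          | (simp only [f0, f1, f2, f3, f4, f5, f6, f7, f8, Rg]; norm_num)
    · simp only [Prod.mk.injEq] at h
      obtain ⟨e1, e2, e3, e4, e5, e6, e7, e8⟩ := h
      have f0 : ∀ h, D ⟨0, h⟩ = ((0, 0) : ℤ × ℤ) := fun _ => hD0
      have f1 : ∀ h, D ⟨1, h⟩ = ((a, 1) : ℤ × ℤ) := fun _ => e1
      have f2 : ∀ h, D ⟨2, h⟩ = ((a + 1, 1) : ℤ × ℤ) := fun _ => e2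
      have f3 : ∀ h, D ⟨3, h⟩ = ((a + 2, 1) : ℤ × ℤ) := fun _ => e3
      have f4 : ∀ h, D ⟨4, h⟩ = ((b, 2) : ℤ × ℤ) := fun _ => e4
      have f5 : ∀ h, D ⟨5, h⟩ = ((b + 1, 2) : ℤ × ℤ) := fun _ => e5
      have f6 : ∀ h, D ⟨6, h⟩ = ((b + 2, 2) : ℤ × ℤ) := fun _ => e6
      have f7 : ∀ h, D ⟨7, h⟩ = ((3, 3) : ℤ × ℤ) := fun _ => e7
      have f8 : ∀ h, D ⟨8, h⟩ = ((4, 3) : ℤ × ℤ) := fun _ => e8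
      intro i j hij
      rcases i with ⟨iv, hi⟩
      rcases j with ⟨jv, hj⟩
      have hv : iv < jv := hij
      rw [mem_iff_Rg]
      interval_cases iv <;> interval_cases jv <;>
        first
          | omega
          | (simp only [f0, f1, f2, f3, f4, f5, f6, f7, f8, Rg]; norm_num)
end

section
/- Let Z ⊆ ℤ × ℤ be the set of pairs (a,b) with b = −1 or b = −2 or (a,b) ∈ {(-1,0), (-2,0), (-2,-3), (-3,-3)}. For a tuple (D₁,…,D₈) ∈ (ℤ×ℤ)⁸ set D₀ = (0,0), and call the tuple an exceptional pattern if Dᵢ − Dⱼ ∈ Z for all 0 ≤ i < j ≤ 8. Then (D₁,…,D₈) is an exceptional pattern if and only if there exist integers a, b such that (D₁,…,D₈) is one of the following three tuples: (1) ((1,0),(2,0),(a,1),(a+1,1),(a+2,1),(b,2),(b+1,2),(b+2,2)); (2) ((1,0),(a,1),(a+1,1),(a+2,1),(b,2),(b+1,2),(b+2,2),(3,3)); (3) ((a,1),(a+1,1),(a+2,1),(b,2),(b+1,2),(b+2,2),(2,3),(3,3)). -/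
theorem mono_aux {xi xj yi yj : ℤ} (h : (yi - yj = -1) ∨ (yi - yj = -2) ∨ (xi - xj = -1 ∧ yi - yj = 0) ∨ (xi - xj = -2 ∧ yi - yj = 0) ∨ (xi - xj = -2 ∧ yi - yj = -3) ∨ (xi - xj = -3 ∧ yi - yj = -3)) : yi ≤ yj := by omega

theorem bound_aux {xj yj : ℤ} (h : (0 - yj = -1) ∨ (0 - yj = -2) ∨ (0 - xj = -1 ∧ 0 - yj = 0) ∨ (0 - xj = -2 ∧ 0 - yj = 0) ∨ (0 - xj = -2 ∧ 0 - yj = -3) ∨ (0 - xj = -3 ∧ 0 - yj = -3)) : (0:ℤ) ≤ yj ∧ yj ≤ 3 := by omega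

theorem four_aux {xi xj xk xl yi yj yk yl : ℤ}
    (hij : (yi - yj = -1) ∨ (yi - yj = -2) ∨ (xi - xj = -1 ∧ yi - yj = 0) ∨ (xi - xj = -2 ∧ yi - yj = 0) ∨ (xi - xj = -2 ∧ yi - yj = -3) ∨ (xi - xj = -3 ∧ yi - yj = -3))
    (hik : (yi - yk = -1) ∨ (yi - yk = -2) ∨ (xi - xk = -1 ∧ yi - yk = 0) ∨ (xi - xk = -2 ∧ yi - yk = 0) ∨ (xi - xk = -2 ∧ yi - yk = -3) ∨ (xi - xk = -3 ∧ yi - yk = -3))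
    (hil : (yi - yl = -1) ∨ (yi - yl = -2) ∨ (xi - xl = -1 ∧ yi - yl = 0) ∨ (xi - xl = -2 ∧ yi - yl = 0) ∨ (xi - xl = -2 ∧ yi - yl = -3) ∨ (xi - xl = -3 ∧ yi - yl = -3))
    (hjk : (yj - yk = -1) ∨ (yj - yk = -2) ∨ (xj - xk = -1 ∧ yj - yk = 0) ∨ (xj - xk = -2 ∧ yj - yk = 0) ∨ (xj - xk = -2 ∧ yj - yk = -3) ∨ (xj - xk = -3 ∧ yj - yk = -3))
    (hjl : (yj - yl = -1) ∨ (yj - yl = -2) ∨ (xj - xl = -1 ∧ yj - yl = 0) ∨ (xj - xl = -2 ∧ yj - yl = 0) ∨ (xj - xl = -2 ∧ yj - yl = -3) ∨ (xj - xl = -3 ∧ yj - yl = -3))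
    (hkl : (yk - yl = -1) ∨ (yk - yl = -2) ∨ (xk - xl = -1 ∧ yk - yl = 0) ∨ (xk - xl = -2 ∧ yk - yl = 0) ∨ (xk - xl = -2 ∧ yk - yl = -3) ∨ (xk - xl = -3 ∧ yk - yl = -3)) :
    yi + 1 ≤ yl := by omega

/-- The set of cohomologically zero classes on P_{P²}(O ⊕ O ⊕ O(1)). -/
def czSetH : Set (ℤ × ℤ) :=
  {p | p.2 = -1 ∨ p.2 = -2 ∨ p = (-1, 0) ∨ p = (-2, 0) ∨ p = (-2, -3) ∨ p = (-3, -3)}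

theorem cz_elim {q r : ℤ × ℤ} (h : q - r ∈ czSetH) :
    (q.2 - r.2 = -1) ∨ (q.2 - r.2 = -2) ∨ (q.1 - r.1 = -1 ∧ q.2 - r.2 = 0) ∨ (q.1 - r.1 = -2 ∧ q.2 - r.2 = 0) ∨ (q.1 - r.1 = -2 ∧ q.2 - r.2 = -3) ∨ (q.1 - r.1 = -3 ∧ q.2 - r.2 = -3) := by
  simp only [czSetH, Set.mem_setOf_eq, Prod.ext_iff, Prod.fst_sub, Prod.snd_sub] at h
  omega

theorem cz_elim0 {q r : ℤ × ℤ} (h : q - r ∈ czSetH) (hq : q = (0, 0)) :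
    (0 - r.2 = -1) ∨ (0 - r.2 = -2) ∨ (0 - r.1 = -1 ∧ 0 - r.2 = 0) ∨ (0 - r.1 = -2 ∧ 0 - r.2 = 0) ∨ (0 - r.1 = -2 ∧ 0 - r.2 = -3) ∨ (0 - r.1 = -3 ∧ 0 - r.2 = -3) := by
  subst hq
  simp only [czSetH, Set.mem_setOf_eq, Prod.ext_iff, Prod.fst_sub, Prod.snd_sub] at h
  omega

theorem cz_intro {q r : ℤ × ℤ}
    (h : (q.2 - r.2 = -1) ∨ (q.2 - r.2 = -2) ∨ (q.1 - r.1 = -1 ∧ q.2 - r.2 = 0) ∨ (q.1 - r.1 = -2 ∧ q.2 - r.2 = 0) ∨ (q.1 - r.1 = -2 ∧ q.2 - r.2 = -3) ∨ (q.1 - r.1 = -3 ∧ q.2 - r.2 = -3)) : q - r ∈ czSetH := by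
  simp only [czSetH, Set.mem_setOf_eq, Prod.ext_iff, Prod.fst_sub, Prod.snd_sub]
  omega

set_option maxHeartbeats 1600000 in
theorem arith_key (x1 x2 x3 x4 x5 x6 x7 x8 y1 y2 y3 y4 y5 y6 y7 y8 : ℤ)
    (h01 : (0 - y1 = -1) ∨ (0 - y1 = -2) ∨ (0 - x1 = -1 ∧ 0 - y1 = 0) ∨ (0 - x1 = -2 ∧ 0 - y1 = 0) ∨ (0 - x1 = -2 ∧ 0 - y1 = -3) ∨ (0 - x1 = -3 ∧ 0 - y1 = -3))
    (h02 : (0 - y2 = -1) ∨ (0 - y2 = -2) ∨ (0 - x2 = -1 ∧ 0 - y2 = 0) ∨ (0 - x2 = -2 ∧ 0 - y2 = 0) ∨ (0 - x2 = -2 ∧ 0 - y2 = -3) ∨ (0 - x2 = -3 ∧ 0 - y2 = -3))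
    (h03 : (0 - y3 = -1) ∨ (0 - y3 = -2) ∨ (0 - x3 = -1 ∧ 0 - y3 = 0) ∨ (0 - x3 = -2 ∧ 0 - y3 = 0) ∨ (0 - x3 = -2 ∧ 0 - y3 = -3) ∨ (0 - x3 = -3 ∧ 0 - y3 = -3))
    (h04 : (0 - y4 = -1) ∨ (0 - y4 = -2) ∨ (0 - x4 = -1 ∧ 0 - y4 = 0) ∨ (0 - x4 = -2 ∧ 0 - y4 = 0) ∨ (0 - x4 = -2 ∧ 0 - y4 = -3) ∨ (0 - x4 = -3 ∧ 0 - y4 = -3))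
    (h05 : (0 - y5 = -1) ∨ (0 - y5 = -2) ∨ (0 - x5 = -1 ∧ 0 - y5 = 0) ∨ (0 - x5 = -2 ∧ 0 - y5 = 0) ∨ (0 - x5 = -2 ∧ 0 - y5 = -3) ∨ (0 - x5 = -3 ∧ 0 - y5 = -3))
    (h06 : (0 - y6 = -1) ∨ (0 - y6 = -2) ∨ (0 - x6 = -1 ∧ 0 - y6 = 0) ∨ (0 - x6 = -2 ∧ 0 - y6 = 0) ∨ (0 - x6 = -2 ∧ 0 - y6 = -3) ∨ (0 - x6 = -3 ∧ 0 - y6 = -3))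
    (h07 : (0 - y7 = -1) ∨ (0 - y7 = -2) ∨ (0 - x7 = -1 ∧ 0 - y7 = 0) ∨ (0 - x7 = -2 ∧ 0 - y7 = 0) ∨ (0 - x7 = -2 ∧ 0 - y7 = -3) ∨ (0 - x7 = -3 ∧ 0 - y7 = -3))
    (h08 : (0 - y8 = -1) ∨ (0 - y8 = -2) ∨ (0 - x8 = -1 ∧ 0 - y8 = 0) ∨ (0 - x8 = -2 ∧ 0 - y8 = 0) ∨ (0 - x8 = -2 ∧ 0 - y8 = -3) ∨ (0 - x8 = -3 ∧ 0 - y8 = -3))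
    (h12 : (y1 - y2 = -1) ∨ (y1 - y2 = -2) ∨ (x1 - x2 = -1 ∧ y1 - y2 = 0) ∨ (x1 - x2 = -2 ∧ y1 - y2 = 0) ∨ (x1 - x2 = -2 ∧ y1 - y2 = -3) ∨ (x1 - x2 = -3 ∧ y1 - y2 = -3))
    (h13 : (y1 - y3 = -1) ∨ (y1 - y3 = -2) ∨ (x1 - x3 = -1 ∧ y1 - y3 = 0) ∨ (x1 - x3 = -2 ∧ y1 - y3 = 0) ∨ (x1 - x3 = -2 ∧ y1 - y3 = -3) ∨ (x1 - x3 = -3 ∧ y1 - y3 = -3))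
    (h14 : (y1 - y4 = -1) ∨ (y1 - y4 = -2) ∨ (x1 - x4 = -1 ∧ y1 - y4 = 0) ∨ (x1 - x4 = -2 ∧ y1 - y4 = 0) ∨ (x1 - x4 = -2 ∧ y1 - y4 = -3) ∨ (x1 - x4 = -3 ∧ y1 - y4 = -3))
    (h15 : (y1 - y5 = -1) ∨ (y1 - y5 = -2) ∨ (x1 - x5 = -1 ∧ y1 - y5 = 0) ∨ (x1 - x5 = -2 ∧ y1 - y5 = 0) ∨ (x1 - x5 = -2 ∧ y1 - y5 = -3) ∨ (x1 - x5 = -3 ∧ y1 - y5 = -3))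
    (h16 : (y1 - y6 = -1) ∨ (y1 - y6 = -2) ∨ (x1 - x6 = -1 ∧ y1 - y6 = 0) ∨ (x1 - x6 = -2 ∧ y1 - y6 = 0) ∨ (x1 - x6 = -2 ∧ y1 - y6 = -3) ∨ (x1 - x6 = -3 ∧ y1 - y6 = -3))
    (h17 : (y1 - y7 = -1) ∨ (y1 - y7 = -2) ∨ (x1 - x7 = -1 ∧ y1 - y7 = 0) ∨ (x1 - x7 = -2 ∧ y1 - y7 = 0) ∨ (x1 - x7 = -2 ∧ y1 - y7 = -3) ∨ (x1 - x7 = -3 ∧ y1 - y7 = -3))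
    (h18 : (y1 - y8 = -1) ∨ (y1 - y8 = -2) ∨ (x1 - x8 = -1 ∧ y1 - y8 = 0) ∨ (x1 - x8 = -2 ∧ y1 - y8 = 0) ∨ (x1 - x8 = -2 ∧ y1 - y8 = -3) ∨ (x1 - x8 = -3 ∧ y1 - y8 = -3))
    (h23 : (y2 - y3 = -1) ∨ (y2 - y3 = -2) ∨ (x2 - x3 = -1 ∧ y2 - y3 = 0) ∨ (x2 - x3 = -2 ∧ y2 - y3 = 0) ∨ (x2 - x3 = -2 ∧ y2 - y3 = -3) ∨ (x2 - x3 = -3 ∧ y2 - y3 = -3))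
    (h24 : (y2 - y4 = -1) ∨ (y2 - y4 = -2) ∨ (x2 - x4 = -1 ∧ y2 - y4 = 0) ∨ (x2 - x4 = -2 ∧ y2 - y4 = 0) ∨ (x2 - x4 = -2 ∧ y2 - y4 = -3) ∨ (x2 - x4 = -3 ∧ y2 - y4 = -3))
    (h25 : (y2 - y5 = -1) ∨ (y2 - y5 = -2) ∨ (x2 - x5 = -1 ∧ y2 - y5 = 0) ∨ (x2 - x5 = -2 ∧ y2 - y5 = 0) ∨ (x2 - x5 = -2 ∧ y2 - y5 = -3) ∨ (x2 - x5 = -3 ∧ y2 - y5 = -3))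
    (h26 : (y2 - y6 = -1) ∨ (y2 - y6 = -2) ∨ (x2 - x6 = -1 ∧ y2 - y6 = 0) ∨ (x2 - x6 = -2 ∧ y2 - y6 = 0) ∨ (x2 - x6 = -2 ∧ y2 - y6 = -3) ∨ (x2 - x6 = -3 ∧ y2 - y6 = -3))
    (h27 : (y2 - y7 = -1) ∨ (y2 - y7 = -2) ∨ (x2 - x7 = -1 ∧ y2 - y7 = 0) ∨ (x2 - x7 = -2 ∧ y2 - y7 = 0) ∨ (x2 - x7 = -2 ∧ y2 - y7 = -3) ∨ (x2 - x7 = -3 ∧ y2 - y7 = -3))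
    (h28 : (y2 - y8 = -1) ∨ (y2 - y8 = -2) ∨ (x2 - x8 = -1 ∧ y2 - y8 = 0) ∨ (x2 - x8 = -2 ∧ y2 - y8 = 0) ∨ (x2 - x8 = -2 ∧ y2 - y8 = -3) ∨ (x2 - x8 = -3 ∧ y2 - y8 = -3))
    (h34 : (y3 - y4 = -1) ∨ (y3 - y4 = -2) ∨ (x3 - x4 = -1 ∧ y3 - y4 = 0) ∨ (x3 - x4 = -2 ∧ y3 - y4 = 0) ∨ (x3 - x4 = -2 ∧ y3 - y4 = -3) ∨ (x3 - x4 = -3 ∧ y3 - y4 = -3))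
    (h35 : (y3 - y5 = -1) ∨ (y3 - y5 = -2) ∨ (x3 - x5 = -1 ∧ y3 - y5 = 0) ∨ (x3 - x5 = -2 ∧ y3 - y5 = 0) ∨ (x3 - x5 = -2 ∧ y3 - y5 = -3) ∨ (x3 - x5 = -3 ∧ y3 - y5 = -3))
    (h36 : (y3 - y6 = -1) ∨ (y3 - y6 = -2) ∨ (x3 - x6 = -1 ∧ y3 - y6 = 0) ∨ (x3 - x6 = -2 ∧ y3 - y6 = 0) ∨ (x3 - x6 = -2 ∧ y3 - y6 = -3) ∨ (x3 - x6 = -3 ∧ y3 - y6 = -3))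
    (h37 : (y3 - y7 = -1) ∨ (y3 - y7 = -2) ∨ (x3 - x7 = -1 ∧ y3 - y7 = 0) ∨ (x3 - x7 = -2 ∧ y3 - y7 = 0) ∨ (x3 - x7 = -2 ∧ y3 - y7 = -3) ∨ (x3 - x7 = -3 ∧ y3 - y7 = -3))
    (h38 : (y3 - y8 = -1) ∨ (y3 - y8 = -2) ∨ (x3 - x8 = -1 ∧ y3 - y8 = 0) ∨ (x3 - x8 = -2 ∧ y3 - y8 = 0) ∨ (x3 - x8 = -2 ∧ y3 - y8 = -3) ∨ (x3 - x8 = -3 ∧ y3 - y8 = -3))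
    (h45 : (y4 - y5 = -1) ∨ (y4 - y5 = -2) ∨ (x4 - x5 = -1 ∧ y4 - y5 = 0) ∨ (x4 - x5 = -2 ∧ y4 - y5 = 0) ∨ (x4 - x5 = -2 ∧ y4 - y5 = -3) ∨ (x4 - x5 = -3 ∧ y4 - y5 = -3))
    (h46 : (y4 - y6 = -1) ∨ (y4 - y6 = -2) ∨ (x4 - x6 = -1 ∧ y4 - y6 = 0) ∨ (x4 - x6 = -2 ∧ y4 - y6 = 0) ∨ (x4 - x6 = -2 ∧ y4 - y6 = -3) ∨ (x4 - x6 = -3 ∧ y4 - y6 = -3))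
    (h47 : (y4 - y7 = -1) ∨ (y4 - y7 = -2) ∨ (x4 - x7 = -1 ∧ y4 - y7 = 0) ∨ (x4 - x7 = -2 ∧ y4 - y7 = 0) ∨ (x4 - x7 = -2 ∧ y4 - y7 = -3) ∨ (x4 - x7 = -3 ∧ y4 - y7 = -3))
    (h48 : (y4 - y8 = -1) ∨ (y4 - y8 = -2) ∨ (x4 - x8 = -1 ∧ y4 - y8 = 0) ∨ (x4 - x8 = -2 ∧ y4 - y8 = 0) ∨ (x4 - x8 = -2 ∧ y4 - y8 = -3) ∨ (x4 - x8 = -3 ∧ y4 - y8 = -3))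
    (h56 : (y5 - y6 = -1) ∨ (y5 - y6 = -2) ∨ (x5 - x6 = -1 ∧ y5 - y6 = 0) ∨ (x5 - x6 = -2 ∧ y5 - y6 = 0) ∨ (x5 - x6 = -2 ∧ y5 - y6 = -3) ∨ (x5 - x6 = -3 ∧ y5 - y6 = -3))
    (h57 : (y5 - y7 = -1) ∨ (y5 - y7 = -2) ∨ (x5 - x7 = -1 ∧ y5 - y7 = 0) ∨ (x5 - x7 = -2 ∧ y5 - y7 = 0) ∨ (x5 - x7 = -2 ∧ y5 - y7 = -3) ∨ (x5 - x7 = -3 ∧ y5 - y7 = -3))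
    (h58 : (y5 - y8 = -1) ∨ (y5 - y8 = -2) ∨ (x5 - x8 = -1 ∧ y5 - y8 = 0) ∨ (x5 - x8 = -2 ∧ y5 - y8 = 0) ∨ (x5 - x8 = -2 ∧ y5 - y8 = -3) ∨ (x5 - x8 = -3 ∧ y5 - y8 = -3))
    (h67 : (y6 - y7 = -1) ∨ (y6 - y7 = -2) ∨ (x6 - x7 = -1 ∧ y6 - y7 = 0) ∨ (x6 - x7 = -2 ∧ y6 - y7 = 0) ∨ (x6 - x7 = -2 ∧ y6 - y7 = -3) ∨ (x6 - x7 = -3 ∧ y6 - y7 = -3))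
    (h68 : (y6 - y8 = -1) ∨ (y6 - y8 = -2) ∨ (x6 - x8 = -1 ∧ y6 - y8 = 0) ∨ (x6 - x8 = -2 ∧ y6 - y8 = 0) ∨ (x6 - x8 = -2 ∧ y6 - y8 = -3) ∨ (x6 - x8 = -3 ∧ y6 - y8 = -3))
    (h78 : (y7 - y8 = -1) ∨ (y7 - y8 = -2) ∨ (x7 - x8 = -1 ∧ y7 - y8 = 0) ∨ (x7 - x8 = -2 ∧ y7 - y8 = 0) ∨ (x7 - x8 = -2 ∧ y7 - y8 = -3) ∨ (x7 - x8 = -3 ∧ y7 - y8 = -3)) :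
  (x1 = 1 ∧ y1 = 0 ∧ x2 = 2 ∧ y2 = 0 ∧ y3 = 1 ∧ x4 = x3+1 ∧ y4 = 1 ∧ x5 = x3+2 ∧ y5 = 1 ∧ y6 = 2 ∧ x7 = x6+1 ∧ y7 = 2 ∧ x8 = x6+2 ∧ y8 = 2)
  ∨ (x1 = 1 ∧ y1 = 0 ∧ y2 = 1 ∧ x3 = x2+1 ∧ y3 = 1 ∧ x4 = x2+2 ∧ y4 = 1 ∧ y5 = 2 ∧ x6 = x5+1 ∧ y6 = 2 ∧ x7 = x5+2 ∧ y7 = 2 ∧ x8 = 3 ∧ y8 = 3)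
  ∨ (y1 = 1 ∧ x2 = x1+1 ∧ y2 = 1 ∧ x3 = x1+2 ∧ y3 = 1 ∧ y4 = 2 ∧ x5 = x4+1 ∧ y5 = 2 ∧ x6 = x4+2 ∧ y6 = 2 ∧ x7 = 2 ∧ y7 = 3 ∧ x8 = 3 ∧ y8 = 3) := by
  have c0 : 0 + 1 ≤ y3 := four_aux h01 h02 h03 h12 h13 h23
  have c1 : y1 + 1 ≤ y4 := four_aux h12 h13 h14 h23 h24 h34
  have c2 : y2 + 1 ≤ y5 := four_aux h23 h24 h25 h34 h35 h45
  have c3 : y3 + 1 ≤ y6 := four_aux h34 h35 h36 h45 h46 h56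
  have c4 : y4 + 1 ≤ y7 := four_aux h45 h46 h47 h56 h57 h67
  have c5 : y5 + 1 ≤ y8 := four_aux h56 h57 h58 h67 h68 h78
  obtain ⟨bl1, bu1⟩ : (0:ℤ) ≤ y1 ∧ y1 ≤ 3 := bound_aux h01
  obtain ⟨bl2, bu2⟩ : (0:ℤ) ≤ y2 ∧ y2 ≤ 3 := bound_aux h02
  obtain ⟨bl3, bu3⟩ : (0:ℤ) ≤ y3 ∧ y3 ≤ 3 := bound_aux h03
  obtain ⟨bl4, bu4⟩ : (0:ℤ) ≤ y4 ∧ y4 ≤ 3 := bound_aux h04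
  obtain ⟨bl5, bu5⟩ : (0:ℤ) ≤ y5 ∧ y5 ≤ 3 := bound_aux h05
  obtain ⟨bl6, bu6⟩ : (0:ℤ) ≤ y6 ∧ y6 ≤ 3 := bound_aux h06
  obtain ⟨bl7, bu7⟩ : (0:ℤ) ≤ y7 ∧ y7 ≤ 3 := bound_aux h07
  obtain ⟨bl8, bu8⟩ : (0:ℤ) ≤ y8 ∧ y8 ≤ 3 := bound_aux h08
  have m1 : y1 ≤ y2 := mono_aux h12
  have m2 : y2 ≤ y3 := mono_aux h23
  have m3 : y3 ≤ y4 := mono_aux h34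
  have m4 : y4 ≤ y5 := mono_aux h45
  have m5 : y5 ≤ y6 := mono_aux h56
  have m6 : y6 ≤ y7 := mono_aux h67
  have m7 : y7 ≤ y8 := mono_aux h78
  interval_cases y1 <;> interval_cases y2 <;> interval_cases y3 <;> interval_cases y4 <;>
    interval_cases y5 <;> interval_cases y6 <;> interval_cases y7 <;> interval_cases y8 <;>
    first
      | (exfalso; omega)
      | (exact Or.inl (by omega))
      | (exact Or.inr (Or.inl (by omega)))
      | (exact Or.inr (Or.inr (by omega)))

set_option maxHeartbeats 1600000 in
/-- Classification of exceptional patterns of length 9 on P_{P²}(O ⊕ O ⊕ O(1)):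
with D₀ = (0,0), we have Dᵢ − Dⱼ ∈ Z for all 0 ≤ i < j ≤ 8 iff the tuple
(D₁,…,D₈) is one of the three listed families. -/
theorem exceptional_pattern_classification_PP2_OO1
    (D : Fin 9 → ℤ × ℤ) (hD0 : D 0 = (0, 0)) :
    (∀ i j : Fin 9, i < j → D i - D j ∈ czSetH) ↔
      ∃ a b : ℤ,
        (D 1, D 2, D 3, D 4, D 5, D 6, D 7, D 8) =
          ((1, 0), (2, 0), (a, 1), (a + 1, 1), (a + 2, 1), (b, 2), (b + 1, 2), (b + 2, 2)) ∨
        (D 1, D 2, D 3, D 4, D 5, D 6, D 7, D 8) =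
          ((1, 0), (a, 1), (a + 1, 1), (a + 2, 1), (b, 2), (b + 1, 2), (b + 2, 2), (3, 3)) ∨
        (D 1, D 2, D 3, D 4, D 5, D 6, D 7, D 8) =
          ((a, 1), (a + 1, 1), (a + 2, 1), (b, 2), (b + 1, 2), (b + 2, 2), (2, 3), (3, 3)) := by
  constructor
  · intro H
    have h01 := cz_elim0 (H 0 1 (by decide)) hD0
    have h02 := cz_elim0 (H 0 2 (by decide)) hD0
    have h03 := cz_elim0 (H 0 3 (by decide)) hD0
    have h04 := cz_elim0 (H 0 4 (by decide)) hD0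
    have h05 := cz_elim0 (H 0 5 (by decide)) hD0
    have h06 := cz_elim0 (H 0 6 (by decide)) hD0
    have h07 := cz_elim0 (H 0 7 (by decide)) hD0
    have h08 := cz_elim0 (H 0 8 (by decide)) hD0
    have h12 := cz_elim (H 1 2 (by decide))
    have h13 := cz_elim (H 1 3 (by decide))
    have h14 := cz_elim (H 1 4 (by decide))
    have h15 := cz_elim (H 1 5 (by decide))
    have h16 := cz_elim (H 1 6 (by decide))
    have h17 := cz_elim (H 1 7 (by decide))
    have h18 := cz_elim (H 1 8 (by decide))
    have h23 := cz_elim (H 2 3 (by decide))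
    have h24 := cz_elim (H 2 4 (by decide))
    have h25 := cz_elim (H 2 5 (by decide))
    have h26 := cz_elim (H 2 6 (by decide))
    have h27 := cz_elim (H 2 7 (by decide))
    have h28 := cz_elim (H 2 8 (by decide))
    have h34 := cz_elim (H 3 4 (by decide))
    have h35 := cz_elim (H 3 5 (by decide))
    have h36 := cz_elim (H 3 6 (by decide))
    have h37 := cz_elim (H 3 7 (by decide))
    have h38 := cz_elim (H 3 8 (by decide))
    have h45 := cz_elim (H 4 5 (by decide))
    have h46 := cz_elim (H 4 6 (by decide))
    have h47 := cz_elim (H 4 7 (by decide))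
    have h48 := cz_elim (H 4 8 (by decide))
    have h56 := cz_elim (H 5 6 (by decide))
    have h57 := cz_elim (H 5 7 (by decide))
    have h58 := cz_elim (H 5 8 (by decide))
    have h67 := cz_elim (H 6 7 (by decide))
    have h68 := cz_elim (H 6 8 (by decide))
    have h78 := cz_elim (H 7 8 (by decide))
    have key := arith_key (D 1).1 (D 2).1 (D 3).1 (D 4).1 (D 5).1 (D 6).1 (D 7).1 (D 8).1 (D 1).2 (D 2).2 (D 3).2 (D 4).2 (D 5).2 (D 6).2 (D 7).2 (D 8).2 h01 h02 h03 h04 h05 h06 h07 h08 h12 h13 h14 h15 h16 h17 h18 h23 h24 h25 h26 h27 h28 h34 h35 h36 h37 h38 h45 h46 h47 h48 h56 h57 h58 h67 h68 h78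
    clear h01 h02 h03 h04 h05 h06 h07 h08 h12 h13 h14 h15 h16 h17 h18 h23 h24 h25 h26 h27 h28 h34 h35 h36 h37 h38 h45 h46 h47 h48 h56 h57 h58 h67 h68 h78
    clear H
    rcases key with k | k | k
    · exact ⟨(D 3).1, (D 6).1, Or.inl (by
        simp only [Prod.mk.injEq, Prod.ext_iff, and_true, true_and]
        omega)⟩
    · exact ⟨(D 2).1, (D 5).1, Or.inr (Or.inl (by
        simp only [Prod.mk.injEq, Prod.ext_iff, and_true, true_and]
        omega))⟩
    · exact ⟨(D 1).1, (D 4).1, Or.inr (Or.inr (by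
        simp only [Prod.mk.injEq, Prod.ext_iff, and_true, true_and]
        omega))⟩
  · rintro ⟨a, b, h | h | h⟩ <;>
      simp only [Prod.mk.injEq] at h
    all_goals obtain ⟨e1, e2, e3, e4, e5, e6, e7, e8⟩ := h
    · have m01 : D 0 - D 1 ∈ czSetH := cz_intro (by simp only [hD0, e1, e2, e3, e4, e5, e6, e7, e8]; omega)
      have m02 : D 0 - D 2 ∈ czSetH := cz_intro (by simp only [hD0, e1, e2, e3, e4, e5, e6, e7, e8]; omega)
      have m03 : D 0 - D 3 ∈ czSetH := cz_intro (by simp only [hD0, e1, e2, e3, e4, e5, e6, e7, e8]; omega)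
      have m04 : D 0 - D 4 ∈ czSetH := cz_intro (by simp only [hD0, e1, e2, e3, e4, e5, e6, e7, e8]; omega)
      have m05 : D 0 - D 5 ∈ czSetH := cz_intro (by simp only [hD0, e1, e2, e3, e4, e5, e6, e7, e8]; omega)
      have m06 : D 0 - D 6 ∈ czSetH := cz_intro (by simp only [hD0, e1, e2, e3, e4, e5, e6, e7, e8]; omega)
      have m07 : D 0 - D 7 ∈ czSetH := cz_intro (by simp only [hD0, e1, e2, e3, e4, e5, e6, e7, e8]; omega)
      have m08 : D 0 - D 8 ∈ czSetH := cz_intro (by simp only [hD0, e1, e2, e3, e4, e5, e6, e7, e8]; omega)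
      have m12 : D 1 - D 2 ∈ czSetH := cz_intro (by simp only [hD0, e1, e2, e3, e4, e5, e6, e7, e8]; omega)
      have m13 : D 1 - D 3 ∈ czSetH := cz_intro (by simp only [hD0, e1, e2, e3, e4, e5, e6, e7, e8]; omega)
      have m14 : D 1 - D 4 ∈ czSetH := cz_intro (by simp only [hD0, e1, e2, e3, e4, e5, e6, e7, e8]; omega)
      have m15 : D 1 - D 5 ∈ czSetH := cz_intro (by simp only [hD0, e1, e2, e3, e4, e5, e6, e7, e8]; omega)
      have m16 : D 1 - D 6 ∈ czSetH := cz_intro (by simp only [hD0, e1, e2, e3, e4, e5, e6, e7, e8]; omega)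
      have m17 : D 1 - D 7 ∈ czSetH := cz_intro (by simp only [hD0, e1, e2, e3, e4, e5, e6, e7, e8]; omega)
      have m18 : D 1 - D 8 ∈ czSetH := cz_intro (by simp only [hD0, e1, e2, e3, e4, e5, e6, e7, e8]; omega)
      have m23 : D 2 - D 3 ∈ czSetH := cz_intro (by simp only [hD0, e1, e2, e3, e4, e5, e6, e7, e8]; omega)
      have m24 : D 2 - D 4 ∈ czSetH := cz_intro (by simp only [hD0, e1, e2, e3, e4, e5, e6, e7, e8]; omega)
      have m25 : D 2 - D 5 ∈ czSetH := cz_intro (by simp only [hD0, e1, e2, e3, e4, e5, e6, e7, e8]; omega)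
      have m26 : D 2 - D 6 ∈ czSetH := cz_intro (by simp only [hD0, e1, e2, e3, e4, e5, e6, e7, e8]; omega)
      have m27 : D 2 - D 7 ∈ czSetH := cz_intro (by simp only [hD0, e1, e2, e3, e4, e5, e6, e7, e8]; omega)
      have m28 : D 2 - D 8 ∈ czSetH := cz_intro (by simp only [hD0, e1, e2, e3, e4, e5, e6, e7, e8]; omega)
      have m34 : D 3 - D 4 ∈ czSetH := cz_intro (by simp only [hD0, e1, e2, e3, e4, e5, e6, e7, e8]; omega)
      have m35 : D 3 - D 5 ∈ czSetH := cz_intro (by simp only [hD0, e1, e2, e3, e4, e5, e6, e7, e8]; omega)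
      have m36 : D 3 - D 6 ∈ czSetH := cz_intro (by simp only [hD0, e1, e2, e3, e4, e5, e6, e7, e8]; omega)
      have m37 : D 3 - D 7 ∈ czSetH := cz_intro (by simp only [hD0, e1, e2, e3, e4, e5, e6, e7, e8]; omega)
      have m38 : D 3 - D 8 ∈ czSetH := cz_intro (by simp only [hD0, e1, e2, e3, e4, e5, e6, e7, e8]; omega)
      have m45 : D 4 - D 5 ∈ czSetH := cz_intro (by simp only [hD0, e1, e2, e3, e4, e5, e6, e7, e8]; omega)
      have m46 : D 4 - D 6 ∈ czSetH := cz_intro (by simp only [hD0, e1, e2, e3, e4, e5, e6, e7, e8]; omega)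
      have m47 : D 4 - D 7 ∈ czSetH := cz_intro (by simp only [hD0, e1, e2, e3, e4, e5, e6, e7, e8]; omega)
      have m48 : D 4 - D 8 ∈ czSetH := cz_intro (by simp only [hD0, e1, e2, e3, e4, e5, e6, e7, e8]; omega)
      have m56 : D 5 - D 6 ∈ czSetH := cz_intro (by simp only [hD0, e1, e2, e3, e4, e5, e6, e7, e8]; omega)
      have m57 : D 5 - D 7 ∈ czSetH := cz_intro (by simp only [hD0, e1, e2, e3, e4, e5, e6, e7, e8]; omega)
      have m58 : D 5 - D 8 ∈ czSetH := cz_intro (by simp only [hD0, e1, e2, e3, e4, e5, e6, e7, e8]; omega)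
      have m67 : D 6 - D 7 ∈ czSetH := cz_intro (by simp only [hD0, e1, e2, e3, e4, e5, e6, e7, e8]; omega)
      have m68 : D 6 - D 8 ∈ czSetH := cz_intro (by simp only [hD0, e1, e2, e3, e4, e5, e6, e7, e8]; omega)
      have m78 : D 7 - D 8 ∈ czSetH := cz_intro (by simp only [hD0, e1, e2, e3, e4, e5, e6, e7, e8]; omega)
      intro i j hij
      fin_cases i <;> fin_cases j <;>
        first
          | exact absurd hij (by decide)
          | exact m01 | exact m02 | exact m03 | exact m04 | exact m05 | exact m06 | exact m07 | exact m08 | exact m12 | exact m13 | exact m14 | exact m15 | exact m16 | exact m17 | exact m18 | exact m23 | exact m24 | exact m25 | exact m26 | exact m27 | exact m28 | exact m34 | exact m35 | exact m36 | exact m37 | exact m38 | exact m45 | exact m46 | exact m47 | exact m48 | exact m56 | exact m57 | exact m58 | exact m67 | exact m68 | exact m78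
    · have m01 : D 0 - D 1 ∈ czSetH := cz_intro (by simp only [hD0, e1, e2, e3, e4, e5, e6, e7, e8]; omega)
      have m02 : D 0 - D 2 ∈ czSetH := cz_intro (by simp only [hD0, e1, e2, e3, e4, e5, e6, e7, e8]; omega)
      have m03 : D 0 - D 3 ∈ czSetH := cz_intro (by simp only [hD0, e1, e2, e3, e4, e5, e6, e7, e8]; omega)
      have m04 : D 0 - D 4 ∈ czSetH := cz_intro (by simp only [hD0, e1, e2, e3, e4, e5, e6, e7, e8]; omega)
      have m05 : D 0 - D 5 ∈ czSetH := cz_intro (by simp only [hD0, e1, e2, e3, e4, e5, e6, e7, e8]; omega)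
      have m06 : D 0 - D 6 ∈ czSetH := cz_intro (by simp only [hD0, e1, e2, e3, e4, e5, e6, e7, e8]; omega)
      have m07 : D 0 - D 7 ∈ czSetH := cz_intro (by simp only [hD0, e1, e2, e3, e4, e5, e6, e7, e8]; omega)
      have m08 : D 0 - D 8 ∈ czSetH := cz_intro (by simp only [hD0, e1, e2, e3, e4, e5, e6, e7, e8]; omega)
      have m12 : D 1 - D 2 ∈ czSetH := cz_intro (by simp only [hD0, e1, e2, e3, e4, e5, e6, e7, e8]; omega)
      have m13 : D 1 - D 3 ∈ czSetH := cz_intro (by simp only [hD0, e1, e2, e3, e4, e5, e6, e7, e8]; omega)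
      have m14 : D 1 - D 4 ∈ czSetH := cz_intro (by simp only [hD0, e1, e2, e3, e4, e5, e6, e7, e8]; omega)
      have m15 : D 1 - D 5 ∈ czSetH := cz_intro (by simp only [hD0, e1, e2, e3, e4, e5, e6, e7, e8]; omega)
      have m16 : D 1 - D 6 ∈ czSetH := cz_intro (by simp only [hD0, e1, e2, e3, e4, e5, e6, e7, e8]; omega)
      have m17 : D 1 - D 7 ∈ czSetH := cz_intro (by simp only [hD0, e1, e2, e3, e4, e5, e6, e7, e8]; omega)
      have m18 : D 1 - D 8 ∈ czSetH := cz_intro (by simp only [hD0, e1, e2, e3, e4, e5, e6, e7, e8]; omega)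
      have m23 : D 2 - D 3 ∈ czSetH := cz_intro (by simp only [hD0, e1, e2, e3, e4, e5, e6, e7, e8]; omega)
      have m24 : D 2 - D 4 ∈ czSetH := cz_intro (by simp only [hD0, e1, e2, e3, e4, e5, e6, e7, e8]; omega)
      have m25 : D 2 - D 5 ∈ czSetH := cz_intro (by simp only [hD0, e1, e2, e3, e4, e5, e6, e7, e8]; omega)
      have m26 : D 2 - D 6 ∈ czSetH := cz_intro (by simp only [hD0, e1, e2, e3, e4, e5, e6, e7, e8]; omega)
      have m27 : D 2 - D 7 ∈ czSetH := cz_intro (by simp only [hD0, e1, e2, e3, e4, e5, e6, e7, e8]; omega)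
      have m28 : D 2 - D 8 ∈ czSetH := cz_intro (by simp only [hD0, e1, e2, e3, e4, e5, e6, e7, e8]; omega)
      have m34 : D 3 - D 4 ∈ czSetH := cz_intro (by simp only [hD0, e1, e2, e3, e4, e5, e6, e7, e8]; omega)
      have m35 : D 3 - D 5 ∈ czSetH := cz_intro (by simp only [hD0, e1, e2, e3, e4, e5, e6, e7, e8]; omega)
      have m36 : D 3 - D 6 ∈ czSetH := cz_intro (by simp only [hD0, e1, e2, e3, e4, e5, e6, e7, e8]; omega)
      have m37 : D 3 - D 7 ∈ czSetH := cz_intro (by simp only [hD0, e1, e2, e3, e4, e5, e6, e7, e8]; omega)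
      have m38 : D 3 - D 8 ∈ czSetH := cz_intro (by simp only [hD0, e1, e2, e3, e4, e5, e6, e7, e8]; omega)
      have m45 : D 4 - D 5 ∈ czSetH := cz_intro (by simp only [hD0, e1, e2, e3, e4, e5, e6, e7, e8]; omega)
      have m46 : D 4 - D 6 ∈ czSetH := cz_intro (by simp only [hD0, e1, e2, e3, e4, e5, e6, e7, e8]; omega)
      have m47 : D 4 - D 7 ∈ czSetH := cz_intro (by simp only [hD0, e1, e2, e3, e4, e5, e6, e7, e8]; omega)
      have m48 : D 4 - D 8 ∈ czSetH := cz_intro (by simp only [hD0, e1, e2, e3, e4, e5, e6, e7, e8]; omega)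
      have m56 : D 5 - D 6 ∈ czSetH := cz_intro (by simp only [hD0, e1, e2, e3, e4, e5, e6, e7, e8]; omega)
      have m57 : D 5 - D 7 ∈ czSetH := cz_intro (by simp only [hD0, e1, e2, e3, e4, e5, e6, e7, e8]; omega)
      have m58 : D 5 - D 8 ∈ czSetH := cz_intro (by simp only [hD0, e1, e2, e3, e4, e5, e6, e7, e8]; omega)
      have m67 : D 6 - D 7 ∈ czSetH := cz_intro (by simp only [hD0, e1, e2, e3, e4, e5, e6, e7, e8]; omega)
      have m68 : D 6 - D 8 ∈ czSetH := cz_intro (by simp only [hD0, e1, e2, e3, e4, e5, e6, e7, e8]; omega)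
      have m78 : D 7 - D 8 ∈ czSetH := cz_intro (by simp only [hD0, e1, e2, e3, e4, e5, e6, e7, e8]; omega)
      intro i j hij
      fin_cases i <;> fin_cases j <;>
        first
          | exact absurd hij (by decide)
          | exact m01 | exact m02 | exact m03 | exact m04 | exact m05 | exact m06 | exact m07 | exact m08 | exact m12 | exact m13 | exact m14 | exact m15 | exact m16 | exact m17 | exact m18 | exact m23 | exact m24 | exact m25 | exact m26 | exact m27 | exact m28 | exact m34 | exact m35 | exact m36 | exact m37 | exact m38 | exact m45 | exact m46 | exact m47 | exact m48 | exact m56 | exact m57 | exact m58 | exact m67 | exact m68 | exact m78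
    · have m01 : D 0 - D 1 ∈ czSetH := cz_intro (by simp only [hD0, e1, e2, e3, e4, e5, e6, e7, e8]; omega)
      have m02 : D 0 - D 2 ∈ czSetH := cz_intro (by simp only [hD0, e1, e2, e3, e4, e5, e6, e7, e8]; omega)
      have m03 : D 0 - D 3 ∈ czSetH := cz_intro (by simp only [hD0, e1, e2, e3, e4, e5, e6, e7, e8]; omega)
      have m04 : D 0 - D 4 ∈ czSetH := cz_intro (by simp only [hD0, e1, e2, e3, e4, e5, e6, e7, e8]; omega)
      have m05 : D 0 - D 5 ∈ czSetH := cz_intro (by simp only [hD0, e1, e2, e3, e4, e5, e6, e7, e8]; omega)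
      have m06 : D 0 - D 6 ∈ czSetH := cz_intro (by simp only [hD0, e1, e2, e3, e4, e5, e6, e7, e8]; omega)
      have m07 : D 0 - D 7 ∈ czSetH := cz_intro (by simp only [hD0, e1, e2, e3, e4, e5, e6, e7, e8]; omega)
      have m08 : D 0 - D 8 ∈ czSetH := cz_intro (by simp only [hD0, e1, e2, e3, e4, e5, e6, e7, e8]; omega)
      have m12 : D 1 - D 2 ∈ czSetH := cz_intro (by simp only [hD0, e1, e2, e3, e4, e5, e6, e7, e8]; omega)
      have m13 : D 1 - D 3 ∈ czSetH := cz_intro (by simp only [hD0, e1, e2, e3, e4, e5, e6, e7, e8]; omega)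
      have m14 : D 1 - D 4 ∈ czSetH := cz_intro (by simp only [hD0, e1, e2, e3, e4, e5, e6, e7, e8]; omega)
      have m15 : D 1 - D 5 ∈ czSetH := cz_intro (by simp only [hD0, e1, e2, e3, e4, e5, e6, e7, e8]; omega)
      have m16 : D 1 - D 6 ∈ czSetH := cz_intro (by simp only [hD0, e1, e2, e3, e4, e5, e6, e7, e8]; omega)
      have m17 : D 1 - D 7 ∈ czSetH := cz_intro (by simp only [hD0, e1, e2, e3, e4, e5, e6, e7, e8]; omega)
      have m18 : D 1 - D 8 ∈ czSetH := cz_intro (by simp only [hD0, e1, e2, e3, e4, e5, e6, e7, e8]; omega)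
      have m23 : D 2 - D 3 ∈ czSetH := cz_intro (by simp only [hD0, e1, e2, e3, e4, e5, e6, e7, e8]; omega)
      have m24 : D 2 - D 4 ∈ czSetH := cz_intro (by simp only [hD0, e1, e2, e3, e4, e5, e6, e7, e8]; omega)
      have m25 : D 2 - D 5 ∈ czSetH := cz_intro (by simp only [hD0, e1, e2, e3, e4, e5, e6, e7, e8]; omega)
      have m26 : D 2 - D 6 ∈ czSetH := cz_intro (by simp only [hD0, e1, e2, e3, e4, e5, e6, e7, e8]; omega)
      have m27 : D 2 - D 7 ∈ czSetH := cz_intro (by simp only [hD0, e1, e2, e3, e4, e5, e6, e7, e8]; omega)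
      have m28 : D 2 - D 8 ∈ czSetH := cz_intro (by simp only [hD0, e1, e2, e3, e4, e5, e6, e7, e8]; omega)
      have m34 : D 3 - D 4 ∈ czSetH := cz_intro (by simp only [hD0, e1, e2, e3, e4, e5, e6, e7, e8]; omega)
      have m35 : D 3 - D 5 ∈ czSetH := cz_intro (by simp only [hD0, e1, e2, e3, e4, e5, e6, e7, e8]; omega)
      have m36 : D 3 - D 6 ∈ czSetH := cz_intro (by simp only [hD0, e1, e2, e3, e4, e5, e6, e7, e8]; omega)
      have m37 : D 3 - D 7 ∈ czSetH := cz_intro (by simp only [hD0, e1, e2, e3, e4, e5, e6, e7, e8]; omega)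
      have m38 : D 3 - D 8 ∈ czSetH := cz_intro (by simp only [hD0, e1, e2, e3, e4, e5, e6, e7, e8]; omega)
      have m45 : D 4 - D 5 ∈ czSetH := cz_intro (by simp only [hD0, e1, e2, e3, e4, e5, e6, e7, e8]; omega)
      have m46 : D 4 - D 6 ∈ czSetH := cz_intro (by simp only [hD0, e1, e2, e3, e4, e5, e6, e7, e8]; omega)
      have m47 : D 4 - D 7 ∈ czSetH := cz_intro (by simp only [hD0, e1, e2, e3, e4, e5, e6, e7, e8]; omega)
      have m48 : D 4 - D 8 ∈ czSetH := cz_intro (by simp only [hD0, e1, e2, e3, e4, e5, e6, e7, e8]; omega)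
      have m56 : D 5 - D 6 ∈ czSetH := cz_intro (by simp only [hD0, e1, e2, e3, e4, e5, e6, e7, e8]; omega)
      have m57 : D 5 - D 7 ∈ czSetH := cz_intro (by simp only [hD0, e1, e2, e3, e4, e5, e6, e7, e8]; omega)
      have m58 : D 5 - D 8 ∈ czSetH := cz_intro (by simp only [hD0, e1, e2, e3, e4, e5, e6, e7, e8]; omega)
      have m67 : D 6 - D 7 ∈ czSetH := cz_intro (by simp only [hD0, e1, e2, e3, e4, e5, e6, e7, e8]; omega)
      have m68 : D 6 - D 8 ∈ czSetH := cz_intro (by simp only [hD0, e1, e2, e3, e4, e5, e6, e7, e8]; omega)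
      have m78 : D 7 - D 8 ∈ czSetH := cz_intro (by simp only [hD0, e1, e2, e3, e4, e5, e6, e7, e8]; omega)
      intro i j hij
      fin_cases i <;> fin_cases j <;>
        first
          | exact absurd hij (by decide)
          | exact m01 | exact m02 | exact m03 | exact m04 | exact m05 | exact m06 | exact m07 | exact m08 | exact m12 | exact m13 | exact m14 | exact m15 | exact m16 | exact m17 | exact m18 | exact m23 | exact m24 | exact m25 | exact m26 | exact m27 | exact m28 | exact m34 | exact m35 | exact m36 | exact m37 | exact m38 | exact m45 | exact m46 | exact m47 | exact m48 | exact m56 | exact m57 | exact m58 | exact m67 | exact m68 | exact m78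
end

section
/- Let Z ⊆ ℤ × ℤ be the set of pairs (a,b) with b = −1 or b = −2 or (a,b) ∈ {(-1,0), (-2,0), (0,-3), (-1,-3)}. For a tuple (D₁,…,D₈) ∈ (ℤ×ℤ)⁸ set D₀ = (0,0), and call the tuple an exceptional pattern if Dᵢ − Dⱼ ∈ Z for all 0 ≤ i < j ≤ 8. Then (D₁,…,D₈) is an exceptional pattern if and only if there exist integers a, b such that (D₁,…,D₈) is one of the following three tuples: (1) ((1,0),(2,0),(a,1),(a+1,1),(a+2,1),(b,2),(b+1,2),(b+2,2)); (2) ((1,0),(a,1),(a+1,1),(a+2,1),(b,2),(b+1,2),(b+2,2),(1,3)); (3) ((a,1),(a+1,1),(a+2,1),(b,2),(b+1,2),(b+2,2),(0,3),(1,3)). -/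
/-- The set of cohomologically zero classes on P_{P²}(O ⊕ O(1) ⊕ O(1)). -/
def czSetI : Set (ℤ × ℤ) :=
  {p | p.2 = -1 ∨ p.2 = -2 ∨ p = (-1, 0) ∨ p = (-2, 0) ∨ p = (0, -3) ∨ p = (-1, -3)}

/-- Arithmetic form of `p - q ∈ czSetI`. -/
private def C (x y x' y' : ℤ) : Prop :=
  y - y' = -1 ∨ y - y' = -2 ∨ (x - x' = -1 ∧ y - y' = 0) ∨ (x - x' = -2 ∧ y - y' = 0) ∨
  (x - x' = 0 ∧ y - y' = -3) ∨ (x - x' = -1 ∧ y - y' = -3)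

private lemma sub_mem_iff (p q : ℤ × ℤ) : p - q ∈ czSetI ↔ C p.1 p.2 q.1 q.2 := by
  simp [czSetI, C, Prod.ext_iff]

private lemma c_bd {x y x' y' : ℤ} (h : C x y x' y') : y ≤ y' ∧ y' ≤ y + 3 := by
  unfold C at h; omega


private lemma c_mk1 {x y x' y' : ℤ} (h : y - y' = -1) : C x y x' y' := Or.inl h
private lemma c_mk2 {x y x' y' : ℤ} (h : y - y' = -2) : C x y x' y' := Or.inr (Or.inl h)
private lemma c_mk3 {x y x' y' : ℤ} (h1 : x - x' = -1) (h2 : y - y' = 0) : C x y x' y' :=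
  Or.inr (Or.inr (Or.inl ⟨h1, h2⟩))
private lemma c_mk4 {x y x' y' : ℤ} (h1 : x - x' = -2) (h2 : y - y' = 0) : C x y x' y' :=
  Or.inr (Or.inr (Or.inr (Or.inl ⟨h1, h2⟩)))
private lemma c_mk5 {x y x' y' : ℤ} (h1 : x - x' = 0) (h2 : y - y' = -3) : C x y x' y' :=
  Or.inr (Or.inr (Or.inr (Or.inr (Or.inl ⟨h1, h2⟩))))
private lemma c_mk6 {x y x' y' : ℤ} (h1 : x - x' = -1) (h2 : y - y' = -3) : C x y x' y' :=
  Or.inr (Or.inr (Or.inr (Or.inr (Or.inr ⟨h1, h2⟩))))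

private lemma c_four {x1 y1 x2 y2 x3 y3 x4 y4 : ℤ} (h12 : C x1 y1 x2 y2)
    (h13 : C x1 y1 x3 y3) (h14 : C x1 y1 x4 y4) (h23 : C x2 y2 x3 y3)
    (h24 : C x2 y2 x4 y4) (h34 : C x3 y3 x4 y4) : y4 ≥ y1 + 1 := by
  unfold C at *; omega

private lemma c_topcap {x0 y0 x6 y6 x7 y7 x8 y8 : ℤ} (h06 : C x0 y0 x6 y6)
    (h07 : C x0 y0 x7 y7) (h08 : C x0 y0 x8 y8) (h67 : C x6 y6 x7 y7)
    (h68 : C x6 y6 x8 y8) (h78 : C x7 y7 x8 y8)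
    (m1 : y6 ≤ y7) (m2 : y7 ≤ y8) (m3 : y8 ≤ y0 + 3) : y6 ≤ y0 + 2 := by
  unfold C at *; omega

private lemma c_lvl03 {x0 y0 x1 y1 x7 y7 x8 y8 : ℤ} (h01 : C x0 y0 x1 y1)
    (h07 : C x0 y0 x7 y7) (h08 : C x0 y0 x8 y8) (h17 : C x1 y1 x7 y7)
    (h18 : C x1 y1 x8 y8) (h78 : C x7 y7 x8 y8)
    (e1 : y1 = y0) (e7 : y7 = y0 + 3) (e8 : y8 = y0 + 3) : False := by
  unfold C at *; omega

private lemma c_single03 {x0 y0 x2 y2 x8 y8 : ℤ} (h08 : C x0 y0 x8 y8)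
    (h28 : C x2 y2 x8 y8) (e2 : y2 = y0) (e8 : y8 = y0 + 3) (hx : x2 ≥ x0 + 2) :
    False := by
  unfold C at *; omega

private lemma c_fourlvl {x1 y1 x2 y2 x3 y3 x4 y4 : ℤ} (h12 : C x1 y1 x2 y2)
    (h23 : C x2 y2 x3 y3) (h34 : C x3 y3 x4 y4) (h14 : C x1 y1 x4 y4)
    (e1 : y1 = y2) (e2 : y2 = y3) (e3 : y3 = y4) : False := by
  unfold C at *; omega

private lemma c_triple {x1 y1 x2 y2 x3 y3 : ℤ} (h12 : C x1 y1 x2 y2)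
    (h13 : C x1 y1 x3 y3) (h23 : C x2 y2 x3 y3) (e1 : y1 = y2) (e2 : y2 = y3) :
    x2 = x1 + 1 ∧ x3 = x1 + 2 := by
  unfold C at *; omega

private lemma c_pair3 {x0 y0 x7 y7 x8 y8 : ℤ} (h07 : C x0 y0 x7 y7)
    (h08 : C x0 y0 x8 y8) (h78 : C x7 y7 x8 y8) (e7 : y7 = y0 + 3)
    (e8 : y8 = y0 + 3) : x7 = x0 ∧ x8 = x0 + 1 := by
  unfold C at *; omega

private lemma c_x1x8 {x0 y0 x1 y1 x8 y8 : ℤ} (h01 : C x0 y0 x1 y1)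
    (h08 : C x0 y0 x8 y8) (h18 : C x1 y1 x8 y8) (e1 : y1 = y0) (e8 : y8 = y0 + 3) :
    x1 = x0 + 1 ∧ x8 = x0 + 1 := by
  unfold C at *; omega

attribute [irreducible] C

set_option maxHeartbeats 1000000 in
/-- Classification of exceptional patterns of length 9 on P_{P²}(O ⊕ O(1) ⊕ O(1)):
with D₀ = (0,0), we have Dᵢ − Dⱼ ∈ Z for all 0 ≤ i < j ≤ 8 iff the tuple
(D₁,…,D₈) is one of the three listed families. -/
theorem exceptional_pattern_classification_PP2_O1O1
    (D : Fin 9 → ℤ × ℤ) (hD0 : D 0 = (0, 0)) :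
    (∀ i j : Fin 9, i < j → D i - D j ∈ czSetI) ↔
      ∃ a b : ℤ,
        (D 1, D 2, D 3, D 4, D 5, D 6, D 7, D 8) =
          ((1, 0), (2, 0), (a, 1), (a + 1, 1), (a + 2, 1), (b, 2), (b + 1, 2), (b + 2, 2)) ∨
        (D 1, D 2, D 3, D 4, D 5, D 6, D 7, D 8) =
          ((1, 0), (a, 1), (a + 1, 1), (a + 2, 1), (b, 2), (b + 1, 2), (b + 2, 2), (1, 3)) ∨
        (D 1, D 2, D 3, D 4, D 5, D 6, D 7, D 8) =
          ((a, 1), (a + 1, 1), (a + 2, 1), (b, 2), (b + 1, 2), (b + 2, 2), (0, 3), (1, 3)) := by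
  obtain ⟨hx0, hy0⟩ : (D 0).1 = 0 ∧ (D 0).2 = 0 := by rw [hD0]; exact ⟨rfl, rfl⟩
  constructor
  · intro h
    have H : ∀ i j : Fin 9, i < j → C (D i).1 (D i).2 (D j).1 (D j).2 :=
      fun i j hij => (sub_mem_iff _ _).mp (h i j hij)
    have H01 := H 0 1 (by decide)
    have H02 := H 0 2 (by decide)
    have H03 := H 0 3 (by decide)
    have H04 := H 0 4 (by decide)
    have H05 := H 0 5 (by decide)
    have H06 := H 0 6 (by decide)
    have H07 := H 0 7 (by decide)
    have H08 := H 0 8 (by decide)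
    have H12 := H 1 2 (by decide)
    have H13 := H 1 3 (by decide)
    have H14 := H 1 4 (by decide)
    have H15 := H 1 5 (by decide)
    have H16 := H 1 6 (by decide)
    have H17 := H 1 7 (by decide)
    have H18 := H 1 8 (by decide)
    have H23 := H 2 3 (by decide)
    have H24 := H 2 4 (by decide)
    have H25 := H 2 5 (by decide)
    have H26 := H 2 6 (by decide)
    have H27 := H 2 7 (by decide)
    have H28 := H 2 8 (by decide)
    have H34 := H 3 4 (by decide)
    have H35 := H 3 5 (by decide)
    have H36 := H 3 6 (by decide)
    have H37 := H 3 7 (by decide)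
    have H38 := H 3 8 (by decide)
    have H45 := H 4 5 (by decide)
    have H46 := H 4 6 (by decide)
    have H47 := H 4 7 (by decide)
    have H48 := H 4 8 (by decide)
    have H56 := H 5 6 (by decide)
    have H57 := H 5 7 (by decide)
    have H58 := H 5 8 (by decide)
    have H67 := H 6 7 (by decide)
    have H68 := H 6 8 (by decide)
    have H78 := H 7 8 (by decide)
    have b01 := c_bd H01
    have b12 := c_bd H12
    have b23 := c_bd H23
    have b34 := c_bd H34
    have b45 := c_bd H45
    have b56 := c_bd H56
    have b67 := c_bd H67
    have b78 := c_bd H78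
    have b08 := c_bd H08
    have f03 := c_four H01 H02 H03 H12 H13 H23
    have f14 := c_four H12 H13 H14 H23 H24 H34
    have f25 := c_four H23 H24 H25 H34 H35 H45
    have f36 := c_four H34 H35 H36 H45 H46 H56
    have f47 := c_four H45 H46 H47 H56 H57 H67
    have f58 := c_four H56 H57 H58 H67 H68 H78
    have hy6 : (D 6).2 = 2 := by
      have := c_topcap H06 H07 H08 H67 H68 H78 b67.1 b78.1 b08.2
      omega
    have hy3 : (D 3).2 = 1 := by omega
    have hsplit : (D 1).2 = 0 ∨ (D 1).2 = 1 := by omega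
    rcases hsplit with hy1 | hy1
    · have hsplit2 : (D 2).2 = 0 ∨ (D 2).2 = 1 := by omega
      rcases hsplit2 with hy2 | hy2
      · -- Case 1: levels (0,0,0,1,1,1,2,2,2)
        have t0 := c_triple H01 H02 H12 (by omega) (by omega)
        have hy8 : (D 8).2 = 2 := by
          by_contra hc
          exact c_single03 H08 H28 (by omega) (by omega) (by omega)
        have hy7 : (D 7).2 = 2 := by omega
        have hy4 : (D 4).2 = 1 := by
          by_contra hc
          exact c_fourlvl H45 H56 H67 H47 (by omega) (by omega) (by omega)
        have hy5 : (D 5).2 = 1 := by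
          by_contra hc
          exact c_fourlvl H56 H67 H78 H58 (by omega) (by omega) (by omega)
        have t1 := c_triple H34 H35 H45 (by omega) (by omega)
        have t2 := c_triple H67 H68 H78 (by omega) (by omega)
        refine ⟨(D 3).1, (D 6).1, Or.inl ?_⟩
        simp only [Prod.mk.injEq, Prod.ext_iff, and_true, true_and]
        omega
      · -- Case 2: levels (0,0,1,1,1,2,2,2,3)
        have hy5 : (D 5).2 = 2 := by omega
        have hy8 : (D 8).2 = 3 := by omega
        have hy4 : (D 4).2 = 1 := by
          by_contra hc
          exact c_lvl03 H01 H07 H08 H17 H18 H78 (by omega) (by omega) (by omega)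
        have hy7 : (D 7).2 = 2 := by
          by_contra hc
          exact c_lvl03 H01 H07 H08 H17 H18 H78 (by omega) (by omega) (by omega)
        have t1 := c_triple H23 H24 H34 (by omega) (by omega)
        have t2 := c_triple H56 H57 H67 (by omega) (by omega)
        have w := c_x1x8 H01 H08 H18 (by omega) (by omega)
        refine ⟨(D 2).1, (D 5).1, Or.inr (Or.inl ?_)⟩
        simp only [Prod.mk.injEq, Prod.ext_iff, and_true, true_and]
        omega
    · -- Case 3: levels (0,1,1,1,2,2,2,3,3)
      have hy2 : (D 2).2 = 1 := by omega
      have hy4 : (D 4).2 = 2 := by omega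
      have hy5 : (D 5).2 = 2 := by omega
      have hy7 : (D 7).2 = 3 := by omega
      have hy8 : (D 8).2 = 3 := by omega
      have t1 := c_triple H12 H13 H23 (by omega) (by omega)
      have t2 := c_triple H45 H46 H56 (by omega) (by omega)
      have p3 := c_pair3 H07 H08 H78 (by omega) (by omega)
      refine ⟨(D 1).1, (D 4).1, Or.inr (Or.inr ?_)⟩
      simp only [Prod.mk.injEq, Prod.ext_iff, and_true, true_and]
      omega
  · rintro ⟨a, b, hc⟩
    suffices key : ∀ i j : Fin 9, i < j → C (D i).1 (D i).2 (D j).1 (D j).2 by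
      intro i j hij
      rw [sub_mem_iff]
      exact key i j hij
    simp only [Prod.mk.injEq, Prod.ext_iff] at hc
    rcases hc with hc | hc | hc
    · obtain ⟨⟨e1, e2⟩, ⟨e3, e4⟩, ⟨e5, e6⟩, ⟨e7, e8⟩, ⟨e9, e10⟩, ⟨e11, e12⟩,
        ⟨e13, e14⟩, ⟨e15, e16⟩⟩ := hc
      have g01 : C (D 0).1 (D 0).2 (D 1).1 (D 1).2 := c_mk3 (by omega) (by omega)
      have g02 : C (D 0).1 (D 0).2 (D 2).1 (D 2).2 := c_mk4 (by omega) (by omega)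
      have g03 : C (D 0).1 (D 0).2 (D 3).1 (D 3).2 := c_mk1 (by omega)
      have g04 : C (D 0).1 (D 0).2 (D 4).1 (D 4).2 := c_mk1 (by omega)
      have g05 : C (D 0).1 (D 0).2 (D 5).1 (D 5).2 := c_mk1 (by omega)
      have g06 : C (D 0).1 (D 0).2 (D 6).1 (D 6).2 := c_mk2 (by omega)
      have g07 : C (D 0).1 (D 0).2 (D 7).1 (D 7).2 := c_mk2 (by omega)
      have g08 : C (D 0).1 (D 0).2 (D 8).1 (D 8).2 := c_mk2 (by omega)
      have g12 : C (D 1).1 (D 1).2 (D 2).1 (D 2).2 := c_mk3 (by omega) (by omega)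
      have g13 : C (D 1).1 (D 1).2 (D 3).1 (D 3).2 := c_mk1 (by omega)
      have g14 : C (D 1).1 (D 1).2 (D 4).1 (D 4).2 := c_mk1 (by omega)
      have g15 : C (D 1).1 (D 1).2 (D 5).1 (D 5).2 := c_mk1 (by omega)
      have g16 : C (D 1).1 (D 1).2 (D 6).1 (D 6).2 := c_mk2 (by omega)
      have g17 : C (D 1).1 (D 1).2 (D 7).1 (D 7).2 := c_mk2 (by omega)
      have g18 : C (D 1).1 (D 1).2 (D 8).1 (D 8).2 := c_mk2 (by omega)
      have g23 : C (D 2).1 (D 2).2 (D 3).1 (D 3).2 := c_mk1 (by omega)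
      have g24 : C (D 2).1 (D 2).2 (D 4).1 (D 4).2 := c_mk1 (by omega)
      have g25 : C (D 2).1 (D 2).2 (D 5).1 (D 5).2 := c_mk1 (by omega)
      have g26 : C (D 2).1 (D 2).2 (D 6).1 (D 6).2 := c_mk2 (by omega)
      have g27 : C (D 2).1 (D 2).2 (D 7).1 (D 7).2 := c_mk2 (by omega)
      have g28 : C (D 2).1 (D 2).2 (D 8).1 (D 8).2 := c_mk2 (by omega)
      have g34 : C (D 3).1 (D 3).2 (D 4).1 (D 4).2 := c_mk3 (by omega) (by omega)
      have g35 : C (D 3).1 (D 3).2 (D 5).1 (D 5).2 := c_mk4 (by omega) (by omega)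
      have g36 : C (D 3).1 (D 3).2 (D 6).1 (D 6).2 := c_mk1 (by omega)
      have g37 : C (D 3).1 (D 3).2 (D 7).1 (D 7).2 := c_mk1 (by omega)
      have g38 : C (D 3).1 (D 3).2 (D 8).1 (D 8).2 := c_mk1 (by omega)
      have g45 : C (D 4).1 (D 4).2 (D 5).1 (D 5).2 := c_mk3 (by omega) (by omega)
      have g46 : C (D 4).1 (D 4).2 (D 6).1 (D 6).2 := c_mk1 (by omega)
      have g47 : C (D 4).1 (D 4).2 (D 7).1 (D 7).2 := c_mk1 (by omega)
      have g48 : C (D 4).1 (D 4).2 (D 8).1 (D 8).2 := c_mk1 (by omega)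
      have g56 : C (D 5).1 (D 5).2 (D 6).1 (D 6).2 := c_mk1 (by omega)
      have g57 : C (D 5).1 (D 5).2 (D 7).1 (D 7).2 := c_mk1 (by omega)
      have g58 : C (D 5).1 (D 5).2 (D 8).1 (D 8).2 := c_mk1 (by omega)
      have g67 : C (D 6).1 (D 6).2 (D 7).1 (D 7).2 := c_mk3 (by omega) (by omega)
      have g68 : C (D 6).1 (D 6).2 (D 8).1 (D 8).2 := c_mk4 (by omega) (by omega)
      have g78 : C (D 7).1 (D 7).2 (D 8).1 (D 8).2 := c_mk3 (by omega) (by omega)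
      intro i j hij
      fin_cases i <;> fin_cases j <;>
        first
          | exact absurd hij (by decide)
          | assumption
    · obtain ⟨⟨e1, e2⟩, ⟨e3, e4⟩, ⟨e5, e6⟩, ⟨e7, e8⟩, ⟨e9, e10⟩, ⟨e11, e12⟩,
        ⟨e13, e14⟩, ⟨e15, e16⟩⟩ := hc
      have g01 : C (D 0).1 (D 0).2 (D 1).1 (D 1).2 := c_mk3 (by omega) (by omega)
      have g02 : C (D 0).1 (D 0).2 (D 2).1 (D 2).2 := c_mk1 (by omega)
      have g03 : C (D 0).1 (D 0).2 (D 3).1 (D 3).2 := c_mk1 (by omega)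
      have g04 : C (D 0).1 (D 0).2 (D 4).1 (D 4).2 := c_mk1 (by omega)
      have g05 : C (D 0).1 (D 0).2 (D 5).1 (D 5).2 := c_mk2 (by omega)
      have g06 : C (D 0).1 (D 0).2 (D 6).1 (D 6).2 := c_mk2 (by omega)
      have g07 : C (D 0).1 (D 0).2 (D 7).1 (D 7).2 := c_mk2 (by omega)
      have g08 : C (D 0).1 (D 0).2 (D 8).1 (D 8).2 := c_mk6 (by omega) (by omega)
      have g12 : C (D 1).1 (D 1).2 (D 2).1 (D 2).2 := c_mk1 (by omega)
      have g13 : C (D 1).1 (D 1).2 (D 3).1 (D 3).2 := c_mk1 (by omega)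
      have g14 : C (D 1).1 (D 1).2 (D 4).1 (D 4).2 := c_mk1 (by omega)
      have g15 : C (D 1).1 (D 1).2 (D 5).1 (D 5).2 := c_mk2 (by omega)
      have g16 : C (D 1).1 (D 1).2 (D 6).1 (D 6).2 := c_mk2 (by omega)
      have g17 : C (D 1).1 (D 1).2 (D 7).1 (D 7).2 := c_mk2 (by omega)
      have g18 : C (D 1).1 (D 1).2 (D 8).1 (D 8).2 := c_mk5 (by omega) (by omega)
      have g23 : C (D 2).1 (D 2).2 (D 3).1 (D 3).2 := c_mk3 (by omega) (by omega)
      have g24 : C (D 2).1 (D 2).2 (D 4).1 (D 4).2 := c_mk4 (by omega) (by omega)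
      have g25 : C (D 2).1 (D 2).2 (D 5).1 (D 5).2 := c_mk1 (by omega)
      have g26 : C (D 2).1 (D 2).2 (D 6).1 (D 6).2 := c_mk1 (by omega)
      have g27 : C (D 2).1 (D 2).2 (D 7).1 (D 7).2 := c_mk1 (by omega)
      have g28 : C (D 2).1 (D 2).2 (D 8).1 (D 8).2 := c_mk2 (by omega)
      have g34 : C (D 3).1 (D 3).2 (D 4).1 (D 4).2 := c_mk3 (by omega) (by omega)
      have g35 : C (D 3).1 (D 3).2 (D 5).1 (D 5).2 := c_mk1 (by omega)
      have g36 : C (D 3).1 (D 3).2 (D 6).1 (D 6).2 := c_mk1 (by omega)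
      have g37 : C (D 3).1 (D 3).2 (D 7).1 (D 7).2 := c_mk1 (by omega)
      have g38 : C (D 3).1 (D 3).2 (D 8).1 (D 8).2 := c_mk2 (by omega)
      have g45 : C (D 4).1 (D 4).2 (D 5).1 (D 5).2 := c_mk1 (by omega)
      have g46 : C (D 4).1 (D 4).2 (D 6).1 (D 6).2 := c_mk1 (by omega)
      have g47 : C (D 4).1 (D 4).2 (D 7).1 (D 7).2 := c_mk1 (by omega)
      have g48 : C (D 4).1 (D 4).2 (D 8).1 (D 8).2 := c_mk2 (by omega)
      have g56 : C (D 5).1 (D 5).2 (D 6).1 (D 6).2 := c_mk3 (by omega) (by omega)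
      have g57 : C (D 5).1 (D 5).2 (D 7).1 (D 7).2 := c_mk4 (by omega) (by omega)
      have g58 : C (D 5).1 (D 5).2 (D 8).1 (D 8).2 := c_mk1 (by omega)
      have g67 : C (D 6).1 (D 6).2 (D 7).1 (D 7).2 := c_mk3 (by omega) (by omega)
      have g68 : C (D 6).1 (D 6).2 (D 8).1 (D 8).2 := c_mk1 (by omega)
      have g78 : C (D 7).1 (D 7).2 (D 8).1 (D 8).2 := c_mk1 (by omega)
      intro i j hij
      fin_cases i <;> fin_cases j <;>
        first
          | exact absurd hij (by decide)
          | assumption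
    · obtain ⟨⟨e1, e2⟩, ⟨e3, e4⟩, ⟨e5, e6⟩, ⟨e7, e8⟩, ⟨e9, e10⟩, ⟨e11, e12⟩,
        ⟨e13, e14⟩, ⟨e15, e16⟩⟩ := hc
      have g01 : C (D 0).1 (D 0).2 (D 1).1 (D 1).2 := c_mk1 (by omega)
      have g02 : C (D 0).1 (D 0).2 (D 2).1 (D 2).2 := c_mk1 (by omega)
      have g03 : C (D 0).1 (D 0).2 (D 3).1 (D 3).2 := c_mk1 (by omega)
      have g04 : C (D 0).1 (D 0).2 (D 4).1 (D 4).2 := c_mk2 (by omega)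
      have g05 : C (D 0).1 (D 0).2 (D 5).1 (D 5).2 := c_mk2 (by omega)
      have g06 : C (D 0).1 (D 0).2 (D 6).1 (D 6).2 := c_mk2 (by omega)
      have g07 : C (D 0).1 (D 0).2 (D 7).1 (D 7).2 := c_mk5 (by omega) (by omega)
      have g08 : C (D 0).1 (D 0).2 (D 8).1 (D 8).2 := c_mk6 (by omega) (by omega)
      have g12 : C (D 1).1 (D 1).2 (D 2).1 (D 2).2 := c_mk3 (by omega) (by omega)
      have g13 : C (D 1).1 (D 1).2 (D 3).1 (D 3).2 := c_mk4 (by omega) (by omega)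
      have g14 : C (D 1).1 (D 1).2 (D 4).1 (D 4).2 := c_mk1 (by omega)
      have g15 : C (D 1).1 (D 1).2 (D 5).1 (D 5).2 := c_mk1 (by omega)
      have g16 : C (D 1).1 (D 1).2 (D 6).1 (D 6).2 := c_mk1 (by omega)
      have g17 : C (D 1).1 (D 1).2 (D 7).1 (D 7).2 := c_mk2 (by omega)
      have g18 : C (D 1).1 (D 1).2 (D 8).1 (D 8).2 := c_mk2 (by omega)
      have g23 : C (D 2).1 (D 2).2 (D 3).1 (D 3).2 := c_mk3 (by omega) (by omega)
      have g24 : C (D 2).1 (D 2).2 (D 4).1 (D 4).2 := c_mk1 (by omega)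
      have g25 : C (D 2).1 (D 2).2 (D 5).1 (D 5).2 := c_mk1 (by omega)
      have g26 : C (D 2).1 (D 2).2 (D 6).1 (D 6).2 := c_mk1 (by omega)
      have g27 : C (D 2).1 (D 2).2 (D 7).1 (D 7).2 := c_mk2 (by omega)
      have g28 : C (D 2).1 (D 2).2 (D 8).1 (D 8).2 := c_mk2 (by omega)
      have g34 : C (D 3).1 (D 3).2 (D 4).1 (D 4).2 := c_mk1 (by omega)
      have g35 : C (D 3).1 (D 3).2 (D 5).1 (D 5).2 := c_mk1 (by omega)
      have g36 : C (D 3).1 (D 3).2 (D 6).1 (D 6).2 := c_mk1 (by omega)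
      have g37 : C (D 3).1 (D 3).2 (D 7).1 (D 7).2 := c_mk2 (by omega)
      have g38 : C (D 3).1 (D 3).2 (D 8).1 (D 8).2 := c_mk2 (by omega)
      have g45 : C (D 4).1 (D 4).2 (D 5).1 (D 5).2 := c_mk3 (by omega) (by omega)
      have g46 : C (D 4).1 (D 4).2 (D 6).1 (D 6).2 := c_mk4 (by omega) (by omega)
      have g47 : C (D 4).1 (D 4).2 (D 7).1 (D 7).2 := c_mk1 (by omega)
      have g48 : C (D 4).1 (D 4).2 (D 8).1 (D 8).2 := c_mk1 (by omega)
      have g56 : C (D 5).1 (D 5).2 (D 6).1 (D 6).2 := c_mk3 (by omega) (by omega)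
      have g57 : C (D 5).1 (D 5).2 (D 7).1 (D 7).2 := c_mk1 (by omega)
      have g58 : C (D 5).1 (D 5).2 (D 8).1 (D 8).2 := c_mk1 (by omega)
      have g67 : C (D 6).1 (D 6).2 (D 7).1 (D 7).2 := c_mk1 (by omega)
      have g68 : C (D 6).1 (D 6).2 (D 8).1 (D 8).2 := c_mk1 (by omega)
      have g78 : C (D 7).1 (D 7).2 (D 8).1 (D 8).2 := c_mk3 (by omega) (by omega)
      intro i j hij
      fin_cases i <;> fin_cases j <;>
        first
          | exact absurd hij (by decide)
          | assumption
end
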